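/- arXiv:1607.01107 — 8 statements merged into one kernel-verified Lean document; each statement's English description precedes it below -/
import Mathlib

section
/- Let G be a real m×n matrix and b ∈ ℝ^m such that the polyhedron P = {x ∈ ℝⁿ : Gx ≤ b} is nonempty, and let f : ℝⁿ → ℝⁿ. Assume that for every i ∈ {1,…,m} the function x ↦ b_i − G_iᵀ f(x) is convex (where G_iᵀ denotes the i-th row of G). Then P is an invariant set for the discrete system x_{k+1} = f(x_k) (i.e., f(P) ⊆ P) if and only if there exists an m×m matrix H with all entries nonnegative such that HGx − G f(x) ≥ Hb − b (componentwise) for all x ∈ ℝⁿ. -/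
open Matrix Finset

section FarkasAux
variable {n : ℕ}

private lemma affine_comb (v : Fin n → ℝ) (r a bb : ℝ) (x y : Fin n → ℝ) (hab : a + bb = 1) :
    v ⬝ᵥ (a • x + bb • y) - r = a * (v ⬝ᵥ x - r) + bb * (v ⬝ᵥ y - r) := by
  have hb : bb = 1 - a := by linarith
  subst hb
  rw [dotProduct_add, dotProduct_smul, dotProduct_smul, smul_eq_mul, smul_eq_mul]
  ring

private lemma concaveOn_affine (v : Fin n → ℝ) (r t : ℝ) :
    ConcaveOn ℝ Set.univ (fun x : Fin n → ℝ => t * (v ⬝ᵥ x - r)) := by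
  refine ⟨convex_univ, ?_⟩
  intro x _ y _ a bb _ _ hab
  refine le_of_eq ?_
  show a • (t * (v ⬝ᵥ x - r)) + bb • (t * (v ⬝ᵥ y - r)) = t * (v ⬝ᵥ (a • x + bb • y) - r)
  rw [affine_comb v r a bb x y hab, smul_eq_mul, smul_eq_mul]
  ring

private lemma concave_sub_affine {g : (Fin n → ℝ) → ℝ} (hg : ConcaveOn ℝ Set.univ g)
    (v : Fin n → ℝ) (r t : ℝ) :
    ConcaveOn ℝ Set.univ (fun x => g x - t * (v ⬝ᵥ x - r)) := by
  have h := hg.add (concaveOn_affine v r (-t))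
  have he : (g + fun x : Fin n → ℝ => (-t) * (v ⬝ᵥ x - r)) = fun x => g x - t * (v ⬝ᵥ x - r) := by
    funext x; simp [Pi.add_apply]; ring
  rwa [he] at h

private lemma ratio_le {g c : (Fin n → ℝ) → ℝ} (hg : ConcaveOn ℝ Set.univ g)
    {C : Set (Fin n → ℝ)}
    (hC : ∀ a bb : ℝ, 0 ≤ a → 0 ≤ bb → a + bb = 1 → ∀ x ∈ C, ∀ y ∈ C, a • x + bb • y ∈ C)
    (hcaff : ∀ (a bb : ℝ), a + bb = 1 → ∀ x y, c (a • x + bb • y) = a * c x + bb * c y)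
    (h0 : ∀ z ∈ C, c z = 0 → g z ≤ 0)
    {x y : Fin n → ℝ} (hx : x ∈ C) (hy : y ∈ C) (hcx : 0 < c x) (hcy : c y < 0) :
    g x / c x ≤ g y / c y := by
  have hd : 0 < c x - c y := by linarith
  set a : ℝ := -c y / (c x - c y) with ha_def
  set bb : ℝ := c x / (c x - c y) with hb_def
  have ha : 0 ≤ a := div_nonneg (by linarith) hd.le
  have hb : 0 ≤ bb := div_nonneg hcx.le hd.le
  have hab : a + bb = 1 := by
    rw [ha_def, hb_def, ← add_div]
    field_simp
    ring
  have hz : a • x + bb • y ∈ C := hC a bb ha hb hab x hx y hy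
  have hcz : c (a • x + bb • y) = 0 := by
    rw [hcaff a bb hab x y, ha_def, hb_def]
    field_simp
    ring
  have hgz : g (a • x + bb • y) ≤ 0 := h0 _ hz hcz
  have hcomb : a * g x + bb * g y ≤ 0 := by
    have := hg.2 (Set.mem_univ x) (Set.mem_univ y) ha hb hab
    rw [smul_eq_mul, smul_eq_mul] at this
    linarith
  have hk : -c y * g x + c x * g y ≤ 0 := by
    have h2 := mul_le_mul_of_nonneg_left hcomb hd.le
    rw [mul_zero] at h2
    calc -c y * g x + c x * g y
        = (c x - c y) * (a * g x + bb * g y) := by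
          rw [ha_def, hb_def]; field_simp
      _ ≤ 0 := h2
  rw [div_le_iff₀ hcx, div_mul_eq_mul_div, le_div_iff_of_neg hcy]
  nlinarith [hk]

private lemma farkas_eq : ∀ (l : ℕ) (g : (Fin n → ℝ) → ℝ),
    ConcaveOn ℝ Set.univ g →
    ∀ (w : Fin l → Fin n → ℝ) (s : Fin l → ℝ),
    (∃ x₀, ∀ j, w j ⬝ᵥ x₀ = s j) →
    (∀ x, (∀ j, w j ⬝ᵥ x = s j) → g x ≤ 0) →
    ∃ mu : Fin l → ℝ, ∀ x, g x ≤ ∑ j, mu j * (w j ⬝ᵥ x - s j) := by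
  intro l
  induction l with
  | zero =>
    intro g _ w s _ h0
    exact ⟨fun _ => 0, fun x => by simpa using h0 x (fun j => j.elim0)⟩
  | succ l ih =>
    intro g hg w s hne h0
    obtain ⟨x₀, hx₀⟩ := hne
    set c : (Fin n → ℝ) → ℝ := fun x => w (Fin.last l) ⬝ᵥ x - s (Fin.last l) with hc_def
    set A : Set (Fin n → ℝ) := {x | ∀ j : Fin l, w j.castSucc ⬝ᵥ x = s j.castSucc} with hA_def
    have hmemA : ∀ x, x ∈ A ↔ ∀ j : Fin l, w j.castSucc ⬝ᵥ x = s j.castSucc := by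
      intro x; rw [hA_def]; rfl
    have hx₀A : x₀ ∈ A := (hmemA x₀).mpr (fun j => hx₀ j.castSucc)
    have hx₀c : c x₀ = 0 := by rw [hc_def]; simp [hx₀ (Fin.last l)]
    have hfull : ∀ x, x ∈ A → c x = 0 → ∀ j : Fin (l+1), w j ⬝ᵥ x = s j := by
      intro x hxA hxc j
      refine Fin.lastCases ?_ (fun i => (hmemA x).mp hxA i) j
      have : w (Fin.last l) ⬝ᵥ x - s (Fin.last l) = 0 := hxc
      linarith
    have hAconv : ∀ a bb : ℝ, 0 ≤ a → 0 ≤ bb → a + bb = 1 →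
        ∀ x ∈ A, ∀ y ∈ A, a • x + bb • y ∈ A := by
      intro a bb _ _ hab x hx y hy
      refine (hmemA _).mpr (fun j => ?_)
      have h1 := affine_comb (w j.castSucc) (s j.castSucc) a bb x y hab
      rw [(hmemA x).mp hx j, (hmemA y).mp hy j] at h1
      linarith
    have hcaff : ∀ a bb : ℝ, a + bb = 1 → ∀ x y, c (a • x + bb • y) = a * c x + bb * c y := by
      intro a bb hab x y
      rw [hc_def]
      exact affine_comb (w (Fin.last l)) (s (Fin.last l)) a bb x y hab
    have h0' : ∀ z ∈ A, c z = 0 → g z ≤ 0 := fun z hz hcz => h0 z (hfull z hz hcz)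
    by_cases hconst : ∀ y ∈ A, c y = 0
    · obtain ⟨mu, hmu⟩ := ih g hg (fun j => w j.castSucc) (fun j => s j.castSucc)
        ⟨x₀, fun j => hx₀ j.castSucc⟩
        (fun x hx => h0 x (hfull x ((hmemA x).mpr hx) (hconst x ((hmemA x).mpr hx))))
      refine ⟨Fin.snoc mu 0, fun x => ?_⟩
      rw [Fin.sum_univ_castSucc]
      simp only [Fin.snoc_castSucc, Fin.snoc_last, zero_mul, add_zero]
      exact hmu x
    · push_neg at hconst
      obtain ⟨y, hyA, hyc⟩ := hconst
      have hline : ∀ t : ℝ, (x₀ + t • (y - x₀)) ∈ A ∧ c (x₀ + t • (y - x₀)) = t * c y := by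
        intro t
        constructor
        · refine (hmemA _).mpr (fun j => ?_)
          rw [dotProduct_add, dotProduct_smul, dotProduct_sub, smul_eq_mul,
            hx₀ j.castSucc, (hmemA y).mp hyA j]
          ring
        · rw [hc_def]
          show w (Fin.last l) ⬝ᵥ (x₀ + t • (y - x₀)) - s (Fin.last l)
            = t * (w (Fin.last l) ⬝ᵥ y - s (Fin.last l))
          rw [dotProduct_add, dotProduct_smul, dotProduct_sub, smul_eq_mul, hx₀ (Fin.last l)]
          ring
      set xp := x₀ + (1 / c y) • (y - x₀) with hxp_def
      set xm := x₀ + (-(1 / c y)) • (y - x₀) with hxm_def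
      have hxpA := (hline (1 / c y)).1
      have hxpc : c xp = 1 := by
        rw [(hline (1 / c y)).2]; field_simp
      have hxmA := (hline (-(1 / c y))).1
      have hxmc : c xm = -1 := by
        rw [(hline (-(1 / c y))).2]; field_simp
      set S : Set ℝ := (fun z => g z / c z) '' {z | z ∈ A ∧ 0 < c z} with hS_def
      have hbdd : BddAbove S := by
        refine ⟨g xm / c xm, ?_⟩
        rintro _ ⟨z, ⟨hzA, hzc⟩, rfl⟩
        exact ratio_le hg hAconv hcaff h0' hzA hxmA hzc (by rw [hxmc]; norm_num)
      have hSne : S.Nonempty := ⟨g xp / c xp, ⟨xp, ⟨hxpA, by rw [hxpc]; norm_num⟩, rfl⟩⟩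
      set lam := sSup S with hlam_def
      have key : ∀ x, x ∈ A → g x ≤ lam * c x := by
        intro x hxA
        rcases lt_trichotomy (c x) 0 with hneg | hzero | hpos
        · have h1 : lam ≤ g x / c x := by
            refine csSup_le hSne ?_
            rintro _ ⟨z, ⟨hzA, hzc⟩, rfl⟩
            exact ratio_le hg hAconv hcaff h0' hzA hxA hzc hneg
          exact (le_div_iff_of_neg hneg).mp h1
        · rw [hzero, mul_zero]; exact h0' x hxA hzero
        · have h1 : g x / c x ≤ lam := le_csSup hbdd ⟨x, ⟨hxA, hpos⟩, rfl⟩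
          exact (div_le_iff₀ hpos).mp h1
      have hgconc : ConcaveOn ℝ Set.univ (fun x => g x - lam * c x) := by
        rw [hc_def]
        exact concave_sub_affine hg (w (Fin.last l)) (s (Fin.last l)) lam
      obtain ⟨mu, hmu⟩ := ih (fun x => g x - lam * c x) hgconc
        (fun j => w j.castSucc) (fun j => s j.castSucc)
        ⟨x₀, fun j => hx₀ j.castSucc⟩
        (fun x hx => sub_nonpos.mpr (key x ((hmemA x).mpr hx)))
      refine ⟨Fin.snoc mu lam, fun x => ?_⟩
      rw [Fin.sum_univ_castSucc]
      simp only [Fin.snoc_castSucc, Fin.snoc_last]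
      have hmux : g x - lam * c x ≤ ∑ j : Fin l, mu j * (w j.castSucc ⬝ᵥ x - s j.castSucc) :=
        hmu x
      have hcx : c x = w (Fin.last l) ⬝ᵥ x - s (Fin.last l) := by rw [hc_def]
      rw [hcx] at hmux
      linarith

private lemma farkas_ineq : ∀ (k l : ℕ) (g : (Fin n → ℝ) → ℝ),
    ConcaveOn ℝ Set.univ g →
    ∀ (v : Fin k → Fin n → ℝ) (r : Fin k → ℝ) (w : Fin l → Fin n → ℝ) (s : Fin l → ℝ),
    (∃ x₀, (∀ i, v i ⬝ᵥ x₀ ≤ r i) ∧ (∀ j, w j ⬝ᵥ x₀ = s j)) →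
    (∀ x, (∀ i, v i ⬝ᵥ x ≤ r i) → (∀ j, w j ⬝ᵥ x = s j) → g x ≤ 0) →
    ∃ (lam : Fin k → ℝ) (mu : Fin l → ℝ), (∀ i, 0 ≤ lam i) ∧
      ∀ x, g x ≤ ∑ i, lam i * (v i ⬝ᵥ x - r i) + ∑ j, mu j * (w j ⬝ᵥ x - s j) := by
  intro k
  induction k with
  | zero =>
    intro l g hg v r w s hne h0
    obtain ⟨x₀, _, hx₀e⟩ := hne
    obtain ⟨mu, hmu⟩ := farkas_eq l g hg w s ⟨x₀, hx₀e⟩ (fun x hx => h0 x (fun i => i.elim0) hx)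
    exact ⟨fun i => i.elim0, mu, fun i => i.elim0, fun x => by simpa using hmu x⟩
  | succ k ih =>
    intro l g hg v r w s hne h0
    obtain ⟨x₀, hx₀i, hx₀e⟩ := hne
    set c : (Fin n → ℝ) → ℝ := fun x => v (Fin.last k) ⬝ᵥ x - r (Fin.last k) with hc_def
    set Q : Set (Fin n → ℝ) :=
      {x | (∀ i : Fin k, v i.castSucc ⬝ᵥ x ≤ r i.castSucc) ∧ (∀ j, w j ⬝ᵥ x = s j)} with hQ_def
    have hmemQ : ∀ x, x ∈ Q ↔
        (∀ i : Fin k, v i.castSucc ⬝ᵥ x ≤ r i.castSucc) ∧ (∀ j, w j ⬝ᵥ x = s j) :=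
      fun x => Iff.rfl
    have hx₀Q : x₀ ∈ Q := (hmemQ x₀).mpr ⟨fun i => hx₀i i.castSucc, hx₀e⟩
    have hfull : ∀ x, x ∈ Q → c x ≤ 0 → g x ≤ 0 := by
      intro x hxQ hxc
      refine h0 x (fun i => ?_) ((hmemQ x).mp hxQ).2
      refine Fin.lastCases ?_ (fun i => ((hmemQ x).mp hxQ).1 i) i
      have hxc' : v (Fin.last k) ⬝ᵥ x - r (Fin.last k) ≤ 0 := hxc
      linarith
    have hQconv : ∀ a bb : ℝ, 0 ≤ a → 0 ≤ bb → a + bb = 1 →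
        ∀ x ∈ Q, ∀ y ∈ Q, a • x + bb • y ∈ Q := by
      intro a bb ha hb hab x hx y hy
      refine (hmemQ _).mpr ⟨fun i => ?_, fun j => ?_⟩
      · have h1 := affine_comb (v i.castSucc) (r i.castSucc) a bb x y hab
        have t1 : a * (v i.castSucc ⬝ᵥ x - r i.castSucc) ≤ 0 :=
          mul_nonpos_iff.mpr (Or.inl ⟨ha, by linarith [((hmemQ x).mp hx).1 i]⟩)
        have t2 : bb * (v i.castSucc ⬝ᵥ y - r i.castSucc) ≤ 0 :=
          mul_nonpos_iff.mpr (Or.inl ⟨hb, by linarith [((hmemQ y).mp hy).1 i]⟩)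
        linarith
      · have h1 := affine_comb (w j) (s j) a bb x y hab
        rw [((hmemQ x).mp hx).2 j, ((hmemQ y).mp hy).2 j] at h1
        linarith
    have hcaff : ∀ a bb : ℝ, a + bb = 1 → ∀ x y, c (a • x + bb • y) = a * c x + bb * c y := by
      intro a bb hab x y
      rw [hc_def]
      exact affine_comb (v (Fin.last k)) (r (Fin.last k)) a bb x y hab
    have h0' : ∀ z ∈ Q, c z = 0 → g z ≤ 0 := fun z hz hcz => hfull z hz (le_of_eq hcz)
    by_cases hex : ∃ y ∈ Q, c y < 0
    · obtain ⟨yn, hynQ, hync⟩ := hex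
      set S : Set ℝ := (fun z => g z / c z) '' {z | z ∈ Q ∧ 0 < c z} with hS_def
      have hbdd : BddAbove S := by
        refine ⟨g yn / c yn, ?_⟩
        rintro _ ⟨z, ⟨hzQ, hzc⟩, rfl⟩
        exact ratio_le hg hQconv hcaff h0' hzQ hynQ hzc hync
      set lam0 : ℝ := max 0 (sSup S) with hlam0_def
      have hlam0 : 0 ≤ lam0 := le_max_left 0 _
      have key : ∀ x, x ∈ Q → g x ≤ lam0 * c x := by
        intro x hxQ
        rcases lt_trichotomy (c x) 0 with hneg | hzero | hpos
        · have hgx : g x ≤ 0 := hfull x hxQ hneg.le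
          have hdiv : 0 ≤ g x / c x := by
            rw [← neg_div_neg_eq]; exact div_nonneg (by linarith) (by linarith)
          have h1 : lam0 ≤ g x / c x := by
            refine max_le hdiv ?_
            refine Real.sSup_le ?_ hdiv
            rintro _ ⟨z, ⟨hzQ, hzc⟩, rfl⟩
            exact ratio_le hg hQconv hcaff h0' hzQ hxQ hzc hneg
          exact (le_div_iff_of_neg hneg).mp h1
        · rw [hzero, mul_zero]; exact h0' x hxQ hzero
        · have h1 : g x / c x ≤ lam0 :=
            le_trans (le_csSup hbdd ⟨x, ⟨hxQ, hpos⟩, rfl⟩) (le_max_right 0 _)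
          exact (div_le_iff₀ hpos).mp h1
      have hgconc : ConcaveOn ℝ Set.univ (fun x => g x - lam0 * c x) := by
        rw [hc_def]
        exact concave_sub_affine hg (v (Fin.last k)) (r (Fin.last k)) lam0
      obtain ⟨lam, mu, hlampos, hlam⟩ := ih l (fun x => g x - lam0 * c x) hgconc
        (fun i => v i.castSucc) (fun i => r i.castSucc) w s
        ⟨x₀, fun i => hx₀i i.castSucc, hx₀e⟩
        (fun x hxi hxe => sub_nonpos.mpr (key x ((hmemQ x).mpr ⟨hxi, hxe⟩)))
      refine ⟨Fin.snoc lam lam0, mu, ?_, fun x => ?_⟩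
      · intro i
        refine Fin.lastCases ?_ (fun i => ?_) i
        · rw [Fin.snoc_last]; exact hlam0
        · rw [Fin.snoc_castSucc]; exact hlampos i
      · have hx' : g x - lam0 * c x ≤
            ∑ i : Fin k, lam i * (v i.castSucc ⬝ᵥ x - r i.castSucc)
              + ∑ j, mu j * (w j ⬝ᵥ x - s j) := hlam x
        have hcx : c x = v (Fin.last k) ⬝ᵥ x - r (Fin.last k) := by rw [hc_def]
        rw [hcx] at hx'
        rw [Fin.sum_univ_castSucc]
        simp only [Fin.snoc_castSucc, Fin.snoc_last]
        linarith
    · push_neg at hex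
      have hposc : ∀ y, y ∈ Q → 0 ≤ c y := fun y hy => not_lt.mp (by exact fun h => absurd h (by simpa using hex y hy))
      obtain ⟨mu1, nu1, hmu1pos, hmu1⟩ := ih l
        (fun x => (-1) * (v (Fin.last k) ⬝ᵥ x - r (Fin.last k)))
        (concaveOn_affine (v (Fin.last k)) (r (Fin.last k)) (-1))
        (fun i => v i.castSucc) (fun i => r i.castSucc) w s
        ⟨x₀, fun i => hx₀i i.castSucc, hx₀e⟩
        (fun x hxi hxe => by
          show (-1:ℝ) * (v (Fin.last k) ⬝ᵥ x - r (Fin.last k)) ≤ 0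
          have h2 : (0:ℝ) ≤ v (Fin.last k) ⬝ᵥ x - r (Fin.last k) :=
            hposc x ((hmemQ x).mpr ⟨hxi, hxe⟩)
          linarith)
      have hx₀c : v (Fin.last k) ⬝ᵥ x₀ = r (Fin.last k) := by
        have h1 : v (Fin.last k) ⬝ᵥ x₀ ≤ r (Fin.last k) := hx₀i (Fin.last k)
        have h2 : (0:ℝ) ≤ v (Fin.last k) ⬝ᵥ x₀ - r (Fin.last k) := hposc x₀ hx₀Q
        linarith
      obtain ⟨lam2, mu2, hlam2pos, hlam2⟩ := ih (l+1) g hg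
        (fun i => v i.castSucc) (fun i => r i.castSucc)
        (Fin.snoc w (v (Fin.last k))) (Fin.snoc s (r (Fin.last k)))
        ⟨x₀, fun i => hx₀i i.castSucc, by
          intro j
          refine Fin.lastCases ?_ (fun j => ?_) j
          · rw [Fin.snoc_last, Fin.snoc_last]; exact hx₀c
          · rw [Fin.snoc_castSucc, Fin.snoc_castSucc]; exact hx₀e j⟩
        (by
          intro x hxi hxe
          refine h0 x (fun i => ?_) (fun j => ?_)
          · refine Fin.lastCases ?_ (fun i => hxi i) i
            have := hxe (Fin.last l)
            rw [Fin.snoc_last, Fin.snoc_last] at this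
            exact le_of_eq this
          · have := hxe j.castSucc
            rwa [Fin.snoc_castSucc, Fin.snoc_castSucc] at this)
      set tau := mu2 (Fin.last l) with htau_def
      set taum := max (-tau) 0 with htaum_def
      have htaum : 0 ≤ taum := le_max_right _ _
      have htptm : 0 ≤ tau + taum := by
        have := le_max_left (-tau) 0
        linarith
      refine ⟨Fin.snoc (fun i => lam2 i + taum * mu1 i) (tau + taum),
              fun j => mu2 j.castSucc + taum * nu1 j, ?_, fun x => ?_⟩
      · intro i
        refine Fin.lastCases ?_ (fun i => ?_) i
        · rw [Fin.snoc_last]; exact htptm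
        · rw [Fin.snoc_castSucc]
          exact add_nonneg (hlam2pos i) (mul_nonneg htaum (hmu1pos i))
      · have h2 := hlam2 x
        rw [Fin.sum_univ_castSucc] at h2
        simp only [Fin.snoc_castSucc, Fin.snoc_last] at h2
        have h1 := hmu1 x
        show g x ≤ (∑ i : Fin (k+1),
            (Fin.snoc (fun i => lam2 i + taum * mu1 i) (tau + taum) : Fin (k+1) → ℝ) i * (v i ⬝ᵥ x - r i))
            + ∑ j : Fin l, (mu2 j.castSucc + taum * nu1 j) * (w j ⬝ᵥ x - s j)
        rw [Fin.sum_univ_castSucc]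
        simp only [Fin.snoc_castSucc, Fin.snoc_last]
        have e1 : ∑ i : Fin k, (lam2 i + taum * mu1 i) * (v i.castSucc ⬝ᵥ x - r i.castSucc)
            = (∑ i : Fin k, lam2 i * (v i.castSucc ⬝ᵥ x - r i.castSucc))
              + taum * ∑ i : Fin k, mu1 i * (v i.castSucc ⬝ᵥ x - r i.castSucc) := by
          rw [Finset.mul_sum, ← Finset.sum_add_distrib]
          exact Finset.sum_congr rfl (fun i _ => by ring)
        have e2 : ∑ j : Fin l, (mu2 j.castSucc + taum * nu1 j) * (w j ⬝ᵥ x - s j)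
            = (∑ j : Fin l, mu2 j.castSucc * (w j ⬝ᵥ x - s j))
              + taum * ∑ j : Fin l, nu1 j * (w j ⬝ᵥ x - s j) := by
          rw [Finset.mul_sum, ← Finset.sum_add_distrib]
          exact Finset.sum_congr rfl (fun j _ => by ring)
        rw [e1, e2]
        nlinarith [h2, h1, htaum,
          mul_nonneg htaum (show (0:ℝ) ≤ (∑ i : Fin k, mu1 i * (v i.castSucc ⬝ᵥ x - r i.castSucc))
            + (∑ j : Fin l, nu1 j * (w j ⬝ᵥ x - s j)) + (v (Fin.last k) ⬝ᵥ x - r (Fin.last k)) by linarith)]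

end FarkasAux


/-- Invariance condition for a polyhedron `P = {x | Gx ≤ b}` under a discrete system
`x_{k+1} = f(x_k)`, assuming each `x ↦ b i - (G f(x)) i` is convex. -/
theorem stmt_0 {n m : ℕ} (G : Matrix (Fin m) (Fin n) ℝ) (b : Fin m → ℝ)
    (f : (Fin n → ℝ) → (Fin n → ℝ))
    (P : Set (Fin n → ℝ)) (hP : P = {x | G.mulVec x ≤ b}) (hPne : P.Nonempty)
    (hconv : ∀ i : Fin m, ConvexOn ℝ Set.univ (fun x : Fin n → ℝ => b i - G.mulVec (f x) i)) :
    (∀ x ∈ P, f x ∈ P) ↔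
      ∃ H : Matrix (Fin m) (Fin m) ℝ, (∀ i j, 0 ≤ H i j) ∧
        ∀ x : Fin n → ℝ,
          H.mulVec b - b ≤ H.mulVec (G.mulVec x) - G.mulVec (f x) := by
  subst hP
  obtain ⟨x₀, hx₀⟩ := hPne
  have hx₀' : ∀ j, G j ⬝ᵥ x₀ ≤ b j := fun j => hx₀ j
  constructor
  · intro hinv
    have key : ∀ i : Fin m, ∃ lam : Fin m → ℝ, (∀ j, 0 ≤ lam j) ∧
        ∀ x, (G.mulVec (f x) i - b i) ≤ ∑ j, lam j * (G j ⬝ᵥ x - b j) := by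
      intro i
      have hconc : ConcaveOn ℝ Set.univ (fun x => G.mulVec (f x) i - b i) := by
        have h := (hconv i).neg
        have he : (-fun x : Fin n → ℝ => b i - G.mulVec (f x) i)
            = fun x => G.mulVec (f x) i - b i := by
          funext x; simp
        rwa [he] at h
      obtain ⟨lam, mu, hpos, hle⟩ := farkas_ineq m 0
        (fun x => G.mulVec (f x) i - b i) hconc
        (fun j => G j) b (fun j => j.elim0) (fun j => j.elim0)
        ⟨x₀, fun j => hx₀' j, fun j => j.elim0⟩
        (fun x hx _ => by
          have hxP : x ∈ {x | G.mulVec x ≤ b} := fun j => hx j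
          have := hinv x hxP
          have h2 : G.mulVec (f x) i ≤ b i := this i
          show G.mulVec (f x) i - b i ≤ 0
          linarith)
      refine ⟨lam, hpos, fun x => ?_⟩
      have h := hle x
      simpa using h
    choose lam hpos hle using key
    refine ⟨Matrix.of fun i j => lam i j, fun i j => hpos i j, fun x => ?_⟩
    rw [Pi.le_def]
    intro i
    rw [Pi.sub_apply, Pi.sub_apply]
    have h := hle i x
    have e : ∑ j, lam i j * (G j ⬝ᵥ x - b j)
        = (∑ j, lam i j * (G.mulVec x) j) - ∑ j, lam i j * b j := by
      rw [← Finset.sum_sub_distrib]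
      exact Finset.sum_congr rfl fun j _ => by rw [mul_sub]; rfl
    rw [e] at h
    have e1 : Matrix.mulVec (Matrix.of fun i j => lam i j) b i = ∑ j, lam i j * b j := rfl
    have e2 : Matrix.mulVec (Matrix.of fun i j => lam i j) (G.mulVec x) i
        = ∑ j, lam i j * (G.mulVec x) j := rfl
    rw [e1, e2]
    linarith
  · rintro ⟨H, hH, hHle⟩ x hx
    have hx' : ∀ j, (G.mulVec x) j ≤ b j := fun j => hx j
    intro i
    have h := hHle x
    have hi := h i
    rw [Pi.sub_apply, Pi.sub_apply] at hi
    have e1 : Matrix.mulVec H b i = ∑ j, H i j * b j := rfl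
    have e2 : Matrix.mulVec H (G.mulVec x) i = ∑ j, H i j * (G.mulVec x) j := rfl
    rw [e1, e2] at hi
    have hnp : ∑ j, (H i j * (G.mulVec x) j - H i j * b j) ≤ 0 := by
      refine Finset.sum_nonpos fun j _ => ?_
      have : H i j * (G.mulVec x) j - H i j * b j = H i j * ((G.mulVec x) j - b j) := by ring
      rw [this]
      exact mul_nonpos_iff.mpr (Or.inl ⟨hH i j, sub_nonpos.mpr (hx' j)⟩)
    rw [Finset.sum_sub_distrib] at hnp
    show G.mulVec (f x) i ≤ b i
    linarith
end

section
/- Let G be a real m×n matrix, b ∈ ℝ^m with the polyhedron P = {x ∈ ℝⁿ : Gx ≤ b} nonempty, and let A be a real n×n matrix. Then P is an invariant set for the linear discrete system x_{k+1} = A x_k (i.e., A(P) ⊆ P) if and only if there exists an m×m matrix H with all entries nonnegative such that HG = GA and Hb ≤ b (componentwise). -/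
open Finset Topology Matrix

variable {ι : Type*} [Fintype ι] {E : Type*} [NormedAddCommGroup E] [NormedSpace ℝ E]

/-- Conic Carathéodory: any nonneg combination can be rewritten with linearly
independent support. -/
lemma exists_indep_rep (v : ι → E) :
    ∀ (k : ℕ) (y : ι → ℝ), (∀ i, 0 ≤ y i) →
      (univ.filter (fun i => y i ≠ 0)).card ≤ k →
      ∃ y' : ι → ℝ, (∀ i, 0 ≤ y' i) ∧ (∑ i, y' i • v i) = (∑ i, y i • v i) ∧
        LinearIndependent ℝ (fun i : (univ.filter (fun i => y' i ≠ 0) : Finset ι) => v i) := by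
  classical
  intro k
  induction k with
  | zero =>
    intro y hy hcard
    refine ⟨y, hy, rfl, ?_⟩
    have : (univ.filter (fun i => y i ≠ 0) : Finset ι) = ∅ := card_eq_zero.mp (Nat.le_zero.mp hcard)
    rw [this]
    exact linearIndependent_empty_type
  | succ k ih =>
    intro y hy hcard
    set s := (univ.filter (fun i => y i ≠ 0) : Finset ι) with hs
    by_cases hind : LinearIndependent ℝ (fun i : s => v i)
    · exact ⟨y, hy, rfl, hind⟩
    · obtain ⟨g, hg0, i₀, hgi₀⟩ := Fintype.not_linearIndependent_iff.mp hind
      have hneg : ∃ g : s → ℝ, (∑ i, g i • v i) = 0 ∧ ∃ i, 0 < g i := by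
        rcases lt_or_gt_of_ne hgi₀ with h | h
        · exact ⟨-g, by simpa using hg0, i₀, by simpa using h⟩
        · exact ⟨g, hg0, i₀, h⟩
      clear hgi₀ hg0
      obtain ⟨g, hg0, i₁, hgi₁⟩ := hneg
      set c : ι → ℝ := fun i => if h : i ∈ s then g ⟨i, h⟩ else 0 with hc
      have hcg : ∀ (i : ι) (h : i ∈ s), c i = g ⟨i, h⟩ := by
        intro i h; simp [hc, h]
      have hcs : ∀ i : ι, i ∉ s → c i = 0 := by
        intro i h; simp [hc, h]
      have hcsum : (∑ i, c i • v i) = 0 := by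
        have h1 : (∑ i, c i • v i) = ∑ i ∈ s, c i • v i :=
          (Finset.sum_subset (subset_univ s) (fun i _ hi => by simp [hcs i hi])).symm
        have h2 : ∑ i : s, g i • v (i : ι) = ∑ i ∈ s, c i • v i := by
          rw [← Finset.sum_attach s (fun i => c i • v i)]
          exact Finset.sum_congr rfl (fun i _ => by rw [hcg i i.2])
        rw [h1, ← h2, hg0]
      set T := s.filter (fun i => 0 < c i) with hT
      have hTne : T.Nonempty := by
        refine ⟨i₁, Finset.mem_filter.mpr ⟨i₁.2, ?_⟩⟩
        rw [hcg i₁ i₁.2]; exact hgi₁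
      obtain ⟨i₂, hi₂T, hi₂min⟩ := T.exists_min_image (fun i => y i / c i) hTne
      have hci₂ : 0 < c i₂ := (Finset.mem_filter.mp hi₂T).2
      have hyi₂ : 0 < y i₂ := by
        have := (Finset.mem_filter.mp ((Finset.mem_filter.mp hi₂T).1)).2
        exact lt_of_le_of_ne (hy i₂) (Ne.symm this)
      set t := y i₂ / c i₂ with ht
      have ht0 : 0 < t := div_pos hyi₂ hci₂
      set y' : ι → ℝ := fun i => y i - t * c i with hy'
      have hy'0 : ∀ i, 0 ≤ y' i := by
        intro i
        rcases le_or_gt (c i) 0 with h | h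
        · have : t * c i ≤ 0 := mul_nonpos_of_nonneg_of_nonpos ht0.le h
          simp only [hy']; linarith [hy i]
        · have his : i ∈ s := by
            by_contra hns; rw [hcs i hns] at h; exact lt_irrefl 0 h
          have hiT : i ∈ T := Finset.mem_filter.mpr ⟨his, h⟩
          have : t * c i ≤ y i := (le_div_iff₀ h).mp (hi₂min i hiT)
          simp only [hy']; linarith
      have hsum : (∑ i, y' i • v i) = ∑ i, y i • v i := by
        have : ∀ i, y' i • v i = y i • v i - t • (c i • v i) := by
          intro i; simp only [hy', sub_smul, smul_smul]
        simp only [this, Finset.sum_sub_distrib, ← Finset.smul_sum, hcsum, smul_zero, sub_zero]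
      have hsub : (univ.filter (fun i => y' i ≠ 0)) ⊆ s := by
        intro i hi
        rw [Finset.mem_filter] at hi
        rw [hs, Finset.mem_filter]
        refine ⟨Finset.mem_univ i, ?_⟩
        intro h0
        have : i ∉ s := by rw [hs, Finset.mem_filter]; simp [h0]
        rw [hy'] at hi; simp [h0, hcs i this] at hi
      have hi₂s : i₂ ∈ s := (Finset.mem_filter.mp hi₂T).1
      have hi₂n : i₂ ∉ (univ.filter (fun i => y' i ≠ 0)) := by
        simp only [Finset.mem_filter, Finset.mem_univ, true_and, not_not, hy', ht]
        field_simp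
        simp
      have hcard' : (univ.filter (fun i => y' i ≠ 0)).card ≤ k := by
        have : (univ.filter (fun i => y' i ≠ 0)).card < s.card :=
          Finset.card_lt_card (Finset.ssubset_iff_of_subset hsub |>.mpr ⟨i₂, hi₂s, hi₂n⟩)
        omega
      obtain ⟨y'', h1, h2, h3⟩ := ih y' hy'0 hcard'
      exact ⟨y'', h1, h2.trans hsum, h3⟩

lemma isClosed_indepCone [FiniteDimensional ℝ E] (v : ι → E) (s : Finset ι)
    (hs : LinearIndependent ℝ (fun i : s => v i)) :
    IsClosed {z : E | ∃ y : ι → ℝ, (∀ i, 0 ≤ y i) ∧ (∀ i ∉ s, y i = 0) ∧ z = ∑ i, y i • v i} := by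
  classical
  set φ : (s → ℝ) →ₗ[ℝ] E := Fintype.linearCombination ℝ (fun i : s => v i) with hφ
  have hker : LinearMap.ker φ = ⊥ := by
    rw [LinearMap.ker_eq_bot']
    intro g hg
    funext i
    exact Fintype.linearIndependent_iff.mp hs g (by simpa [hφ, Fintype.linearCombination_apply] using hg) i
  have hembed : IsClosedEmbedding φ := LinearMap.isClosedEmbedding_of_injective hker
  have horth : IsClosed {w : s → ℝ | ∀ i, 0 ≤ w i} := by
    have : {w : s → ℝ | ∀ i, 0 ≤ w i} = ⋂ i, {w | 0 ≤ w i} := by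
      ext w; simp
    rw [this]
    exact isClosed_iInter fun i => isClosed_le continuous_const (continuous_apply i)
  have himg : {z : E | ∃ y : ι → ℝ, (∀ i, 0 ≤ y i) ∧ (∀ i ∉ s, y i = 0) ∧ z = ∑ i, y i • v i}
      = φ '' {w : s → ℝ | ∀ i, 0 ≤ w i} := by
    ext z
    constructor
    · rintro ⟨y, hy0, hys, rfl⟩
      refine ⟨fun i => y i, fun i => hy0 i, ?_⟩
      simp only [hφ, Fintype.linearCombination_apply]
      rw [← Finset.sum_subset (Finset.subset_univ s) (fun i _ hi => by simp [hys i hi]),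
        ← Finset.sum_attach s (fun i => y i • v i)]
      rfl
    · rintro ⟨w, hw, rfl⟩
      refine ⟨fun i => if h : i ∈ s then w ⟨i, h⟩ else 0, ?_, ?_, ?_⟩
      · intro i; by_cases h : i ∈ s
        · simpa [h] using hw ⟨i, h⟩
        · simp [h]
      · intro i h; simp [h]
      · simp only [hφ, Fintype.linearCombination_apply]
        rw [← Finset.sum_subset (Finset.subset_univ s) (fun i _ hi => by simp [hi]),
          ← Finset.sum_attach s (fun i => (if h : i ∈ s then w ⟨i, h⟩ else 0) • v i)]
        exact Finset.sum_congr rfl (fun i _ => by simp [i.2])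
  rw [himg]
  exact hembed.isClosedMap _ horth

lemma isClosed_coneSet [FiniteDimensional ℝ E] (v : ι → E) :
    IsClosed {z : E | ∃ y : ι → ℝ, (∀ i, 0 ≤ y i) ∧ z = ∑ i, y i • v i} := by
  classical
  have : {z : E | ∃ y : ι → ℝ, (∀ i, 0 ≤ y i) ∧ z = ∑ i, y i • v i}
      = ⋃ s ∈ {s : Finset ι | LinearIndependent ℝ (fun i : s => v i)},
        {z : E | ∃ y : ι → ℝ, (∀ i, 0 ≤ y i) ∧ (∀ i ∉ s, y i = 0) ∧ z = ∑ i, y i • v i} := by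
    ext z
    simp only [Set.mem_iUnion, Set.mem_setOf_eq]
    constructor
    · rintro ⟨y, hy0, rfl⟩
      obtain ⟨y', h0, hsum, hind⟩ := exists_indep_rep v (univ.filter (fun i => y i ≠ 0)).card y hy0 le_rfl
      refine ⟨univ.filter (fun i => y' i ≠ 0), hind, y', h0, ?_, hsum.symm⟩
      intro i hi
      simpa using hi
    · rintro ⟨s, _, y, hy0, _, rfl⟩
      exact ⟨y, hy0, rfl⟩
  rw [this]
  exact Set.Finite.isClosed_biUnion (Set.toFinite _) (fun s hs => isClosed_indepCone v s hs)

lemma farkas_affine {m n : ℕ} (G : Matrix (Fin m) (Fin n) ℝ) (b : Fin m → ℝ)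
    (c : Fin n → ℝ) (d : ℝ) (hne : ∃ x, G.mulVec x ≤ b)
    (hle : ∀ x, G.mulVec x ≤ b → c ⬝ᵥ x ≤ d) :
    ∃ y : Fin m → ℝ, (∀ i, 0 ≤ y i) ∧ (∀ j, ∑ i, y i * G i j = c j) ∧ y ⬝ᵥ b ≤ d := by
  classical
  set v : Option (Fin m) → EuclideanSpace ℝ (Fin (n + 1)) :=
    fun o => WithLp.toLp 2 (Option.elim o (fun j => Fin.lastCases 1 (fun _ => 0) j)
      (fun i => (fun j => Fin.lastCases (b i) (fun j' => G i j') j))) with hv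
  set K : Set (EuclideanSpace ℝ (Fin (n + 1))) :=
    {z | ∃ y : Option (Fin m) → ℝ, (∀ i, 0 ≤ y i) ∧ z = ∑ i, y i • v i} with hK
  set t : EuclideanSpace ℝ (Fin (n + 1)) := WithLp.toLp 2 (fun j => Fin.lastCases d c j) with htdef
  have hvmem : ∀ i, v i ∈ K := by
    intro i
    refine ⟨fun i' => if i' = i then 1 else 0, fun i' => by positivity, ?_⟩
    rw [Finset.sum_eq_single i (fun i' _ h => by simp [h]) (by simp)]
    simp
  have htK : t ∈ K := by
    by_contra hnot
    set Kc : ConvexCone ℝ (EuclideanSpace ℝ (Fin (n + 1))) :=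
      { carrier := K
        smul_mem' := by
          rintro a ha z ⟨y, hy0, rfl⟩
          exact ⟨fun i => a * y i, fun i => mul_nonneg ha.le (hy0 i), by
            rw [Finset.smul_sum]; exact Finset.sum_congr rfl fun i _ => smul_smul a (y i) (v i)⟩
        add_mem' := by
          rintro z ⟨y, hy0, rfl⟩ z' ⟨y', hy'0, rfl⟩
          exact ⟨fun i => y i + y' i, fun i => add_nonneg (hy0 i) (hy'0 i), by
            rw [← Finset.sum_add_distrib]
            exact Finset.sum_congr rfl fun i _ => (add_smul (y i) (y' i) (v i)).symm⟩ }
    have hKne : (Kc : Set (EuclideanSpace ℝ (Fin (n + 1)))).Nonempty :=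
      ⟨(0 : EuclideanSpace ℝ (Fin (n + 1))), (0 : Option (Fin m) → ℝ), fun i => le_rfl, by simp⟩
    have hKcl : IsClosed (Kc : Set (EuclideanSpace ℝ (Fin (n + 1)))) := isClosed_coneSet v
    obtain ⟨ξ, hξ1, hξ2⟩ :=
      ProperCone.hyperplane_separation'
        ({ toSubmodule :=
            { carrier := K
              add_mem' := fun ha hb => Kc.add_mem' ha hb
              zero_mem' := ⟨(0 : Option (Fin m) → ℝ), fun i => le_rfl, by simp⟩
              smul_mem' := by
                rintro a z ⟨y, hy0, rfl⟩
                exact ⟨fun i => (a : ℝ) * y i, fun i => mul_nonneg a.2 (hy0 i), by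
                  rw [Finset.smul_sum]
                  exact Finset.sum_congr rfl fun i _ => smul_smul (a : ℝ) (y i) (v i)⟩ }
           isClosed' := hKcl } : ProperCone ℝ (EuclideanSpace ℝ (Fin (n + 1)))) hnot
    set u : Fin n → ℝ := fun j => ξ (Fin.castSucc j) with hu
    set τ : ℝ := ξ (Fin.last n) with hτ
    have hinner : ∀ (x : EuclideanSpace ℝ (Fin (n + 1))),
        (inner ℝ x ξ : ℝ) = ∑ j, x j * ξ j := by
      intro x; simp [PiLp.inner_apply, RCLike.inner_apply, starRingEnd_apply]
      exact Finset.sum_congr rfl fun j _ => mul_comm _ _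
    have hτ0 : 0 ≤ τ := by
      have := hξ1 _ (hvmem none)
      rw [hinner] at this
      rw [Fin.sum_univ_castSucc] at this
      simpa [hv, hτ] using this
    have hGi : ∀ i, 0 ≤ ∑ j, G i j * u j + b i * τ := by
      intro i
      have := hξ1 _ (hvmem (some i))
      rw [hinner, Fin.sum_univ_castSucc] at this
      simpa [hv, hu, hτ] using this
    have hct : ∑ j, c j * u j + d * τ < 0 := by
      have h2 := hξ2
      rw [hinner, Fin.sum_univ_castSucc] at h2
      simpa [htdef, hu, hτ, mul_comm] using h2
    rcases eq_or_lt_of_le hτ0 with hτz | hτp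
    · -- τ = 0
      obtain ⟨x₀, hx₀⟩ := hne
      have hcu : ∑ j, c j * u j < 0 := by rw [← hτz] at hct; simpa using hct
      have hSne : (∑ j, c j * u j) ≠ 0 := ne_of_lt hcu
      set s : ℝ := (d - c ⬝ᵥ x₀ + 1) / (-(∑ j, c j * u j)) with hsdef
      have hs0 : 0 ≤ s := by
        apply div_nonneg _ (by linarith)
        have := hle x₀ hx₀
        linarith
      have hfeas : G.mulVec (x₀ - s • u) ≤ b := by
        intro i
        have h1 : G.mulVec (x₀ - s • u) i = G.mulVec x₀ i - s * ∑ j, G i j * u j := by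
          simp [Matrix.mulVec, dotProduct, Finset.mul_sum, mul_sub, Finset.sum_sub_distrib,
            mul_assoc, mul_left_comm]
        have h2 : 0 ≤ ∑ j, G i j * u j := by have := hGi i; rw [← hτz] at this; simpa using this
        rw [h1]
        have := hx₀ i
        nlinarith
      have hc1 : c ⬝ᵥ (x₀ - s • u) = c ⬝ᵥ x₀ - s * ∑ j, c j * u j := by
        simp [dotProduct, Finset.mul_sum, mul_sub, Finset.sum_sub_distrib, mul_assoc,
          mul_left_comm]
      have hsS : s * (∑ j, c j * u j) = -(d - c ⬝ᵥ x₀ + 1) := by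
        rw [hsdef]
        field_simp
      have := hle _ hfeas
      rw [hc1, hsS] at this
      linarith
    · -- τ > 0
      set x : Fin n → ℝ := (-τ⁻¹) • u with hx
      have hfeas : G.mulVec x ≤ b := by
        intro i
        have h1 : G.mulVec x i = -τ⁻¹ * ∑ j, G i j * u j := by
          simp [hx, Matrix.mulVec, dotProduct, Finset.mul_sum, mul_assoc, mul_left_comm]
        rw [h1]
        have hkey : τ⁻¹ * τ = 1 := inv_mul_cancel₀ hτp.ne'
        have h3 := mul_nonneg (inv_pos.mpr hτp).le (hGi i)
        rw [mul_add] at h3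
        have h5 : τ⁻¹ * (b i * τ) = b i := by
          rw [mul_comm (b i) τ, ← mul_assoc, hkey, one_mul]
        rw [h5] at h3
        linarith
      have hcx : c ⬝ᵥ x = -τ⁻¹ * ∑ j, c j * u j := by
        simp [hx, dotProduct, Finset.mul_sum, mul_assoc, mul_left_comm]
      have hled := hle x hfeas
      rw [hcx] at hled
      have hkey : τ⁻¹ * τ = 1 := inv_mul_cancel₀ hτp.ne'
      have h4 := mul_le_mul_of_nonneg_right hled hτ0
      have h6 : (-τ⁻¹ * ∑ j, c j * u j) * τ = -(∑ j, c j * u j) := by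
        calc (-τ⁻¹ * ∑ j, c j * u j) * τ = -((∑ j, c j * u j) * (τ⁻¹ * τ)) := by ring
          _ = -(∑ j, c j * u j) := by rw [hkey, mul_one]
      rw [h6] at h4
      linarith
  obtain ⟨y, hy0, hyt⟩ := htK
  refine ⟨fun i => y (some i), fun i => hy0 (some i), ?_, ?_⟩
  · intro j
    have h := congrArg (fun z : EuclideanSpace ℝ (Fin (n + 1)) => z (Fin.castSucc j)) hyt
    rw [WithLp.ofLp_sum, Finset.sum_apply, Fintype.sum_option] at h
    simp only [htdef, hv, WithLp.ofLp_toLp, PiLp.smul_apply, smul_eq_mul, Option.elim,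
      Fin.lastCases_castSucc, mul_zero, zero_add] at h
    exact h.symm
  · have h := congrArg (fun z : EuclideanSpace ℝ (Fin (n + 1)) => z (Fin.last n)) hyt
    rw [WithLp.ofLp_sum, Finset.sum_apply, Fintype.sum_option] at h
    simp only [htdef, hv, WithLp.ofLp_toLp, PiLp.smul_apply, smul_eq_mul, Option.elim,
      Fin.lastCases_last, mul_one] at h
    have : (fun i => y (some i)) ⬝ᵥ b = ∑ i, y (some i) * b i := rfl
    rw [this, h]
    have := hy0 none
    linarith

/-- Invariance condition for a polyhedron `P = {x | Gx ≤ b}` under a linear discrete system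
`x_{k+1} = A x_k`: `P` is invariant iff there is an entrywise-nonnegative `H` with
`HG = GA` and `Hb ≤ b`. -/
theorem stmt_1 {n m : ℕ} (G : Matrix (Fin m) (Fin n) ℝ) (b : Fin m → ℝ)
    (A : Matrix (Fin n) (Fin n) ℝ)
    (P : Set (Fin n → ℝ)) (hP : P = {x | G.mulVec x ≤ b}) (hPne : P.Nonempty) :
    (∀ x ∈ P, A.mulVec x ∈ P) ↔
      ∃ H : Matrix (Fin m) (Fin m) ℝ, (∀ i j, 0 ≤ H i j) ∧
        H * G = G * A ∧ H.mulVec b ≤ b := by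
  classical
  subst hP
  obtain ⟨x₀, hx₀⟩ := hPne
  constructor
  · intro hinv
    have h : ∀ i : Fin m, ∃ y : Fin m → ℝ, (∀ k, 0 ≤ y k) ∧
        (∀ j, ∑ k, y k * G k j = (G * A) i j) ∧ y ⬝ᵥ b ≤ b i := by
      intro i
      apply farkas_affine G b (fun j => (G * A) i j) (b i) ⟨x₀, hx₀⟩
      intro x hx
      have hmem := hinv x hx i
      have : (fun j => (G * A) i j) ⬝ᵥ x = G.mulVec (A.mulVec x) i := by
        rw [Matrix.mulVec_mulVec]
        rfl
      rw [this]
      exact hmem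
    choose H h1 h2 h3 using h
    refine ⟨fun i k => H i k, fun i k => h1 i k, ?_, ?_⟩
    · ext i j
      rw [Matrix.mul_apply]
      exact h2 i j
    · intro i
      exact h3 i
  · rintro ⟨H, hH0, hHG, hHb⟩ x hx
    have key : G.mulVec (A.mulVec x) = H.mulVec (G.mulVec x) := by
      rw [Matrix.mulVec_mulVec, Matrix.mulVec_mulVec, hHG]
    intro i
    rw [key]
    calc H.mulVec (G.mulVec x) i = ∑ k, H i k * G.mulVec x k := rfl
      _ ≤ ∑ k, H i k * b k :=
        Finset.sum_le_sum fun k _ => mul_le_mul_of_nonneg_left (hx k) (hH0 i k)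
      _ = H.mulVec b i := rfl
      _ ≤ b i := hHb i
end

section
/- Let Q be a symmetric positive definite real n×n matrix, E = {x ∈ ℝⁿ : xᵀQx ≤ 1}, and A a real n×n matrix. Then E is an invariant set for the linear discrete system x_{k+1} = A x_k (i.e., A(E) ⊆ E) if and only if there exists β ∈ [0,1] such that the matrix AᵀQA − βQ is negative semidefinite. -/
open Matrix

lemma quad_eq {n : ℕ} (Q A : Matrix (Fin n) (Fin n) ℝ) (x : Fin n → ℝ) :
    x ⬝ᵥ (Aᵀ * Q * A).mulVec x = (A.mulVec x) ⬝ᵥ Q.mulVec (A.mulVec x) := by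
  rw [← Matrix.mulVec_mulVec, ← Matrix.mulVec_mulVec, Matrix.dotProduct_mulVec,
    Matrix.vecMul_transpose]

/-- Invariance condition for an ellipsoid `E = {x | xᵀQx ≤ 1}` under a linear discrete
system `x_{k+1} = A x_k`: `E` is invariant iff `AᵀQA - βQ ⪯ 0` for some `β ∈ [0,1]`. -/
theorem stmt_3 {n : ℕ} (Q : Matrix (Fin n) (Fin n) ℝ) (hQsymm : Q.IsSymm) (hQpd : Q.PosDef)
    (A : Matrix (Fin n) (Fin n) ℝ)
    (E : Set (Fin n → ℝ)) (hE : E = {x | x ⬝ᵥ Q.mulVec x ≤ 1}) :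
    (∀ x ∈ E, A.mulVec x ∈ E) ↔
      ∃ β : ℝ, 0 ≤ β ∧ β ≤ 1 ∧
        ∀ x : Fin n → ℝ, x ⬝ᵥ (Aᵀ * Q * A - β • Q).mulVec x ≤ 0 := by
  subst hE
  constructor
  · intro hinv
    refine ⟨1, zero_le_one, le_refl 1, fun x => ?_⟩
    have key : x ⬝ᵥ (Aᵀ * Q * A).mulVec x ≤ x ⬝ᵥ Q.mulVec x := by
      rcases eq_or_ne x 0 with rfl | hx
      · simp
      · set c : ℝ := x ⬝ᵥ Q.mulVec x with hc
        have hcpos : 0 < c := hQpd.dotProduct_mulVec_pos hx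
        set a : ℝ := (Real.sqrt c)⁻¹ with ha
        have hsq : 0 < Real.sqrt c := Real.sqrt_pos.mpr hcpos
        have hy : (a • x) ⬝ᵥ Q.mulVec (a • x) = 1 := by
          rw [Matrix.mulVec_smul, dotProduct_smul, smul_dotProduct]
          simp only [smul_eq_mul]
          rw [← hc, ha]
          field_simp
          rw [Real.sq_sqrt hcpos.le]
        have hmem : (a • x) ∈ {x : Fin n → ℝ | x ⬝ᵥ Q.mulVec x ≤ 1} := le_of_eq hy
        have h2 := hinv _ hmem
        simp only [Set.mem_setOf_eq] at h2
        rw [Matrix.mulVec_smul] at h2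
        rw [Matrix.mulVec_smul, dotProduct_smul, smul_dotProduct] at h2
        have h3 : a ^ 2 * ((A.mulVec x) ⬝ᵥ Q.mulVec (A.mulVec x)) ≤ 1 := by
          simpa [smul_eq_mul, sq, mul_assoc] using h2
        have ha2 : a ^ 2 = c⁻¹ := by
          rw [ha, ← Real.sqrt_inv, Real.sq_sqrt (inv_nonneg.mpr hcpos.le)]
        rw [ha2] at h3
        rw [quad_eq]
        calc (A.mulVec x) ⬝ᵥ Q.mulVec (A.mulVec x)
            = c * (c⁻¹ * ((A.mulVec x) ⬝ᵥ Q.mulVec (A.mulVec x))) := by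
              field_simp
          _ ≤ c * 1 := by
              exact mul_le_mul_of_nonneg_left h3 hcpos.le
          _ = c := mul_one c
    rw [Matrix.sub_mulVec, dotProduct_sub, one_smul]
    linarith
  · rintro ⟨β, hβ0, hβ1, hβ⟩ x hx
    simp only [Set.mem_setOf_eq] at hx ⊢
    have h := hβ x
    rw [Matrix.sub_mulVec, dotProduct_sub, Matrix.smul_mulVec, dotProduct_smul,
      smul_eq_mul] at h
    have hq : 0 ≤ x ⬝ᵥ Q.mulVec x := hQpd.posSemidef.dotProduct_mulVec_nonneg x
    rw [quad_eq] at h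
    nlinarith
end

section
/- Let g : ℝⁿ → ℝ be a convex function such that there exists x⁰ ∈ ℝⁿ with g(x⁰) < 0, let S = {x ∈ ℝⁿ : g(x) ≤ 0}, and let f : ℝⁿ → ℝⁿ be such that the composition x ↦ g(f(x)) is concave on ℝⁿ. Then S is an invariant set for the discrete system x_{k+1} = f(x_k) (i.e., f(S) ⊆ S) if and only if there exists α ≥ 0 such that α·g(x) − g(f(x)) ≥ 0 for all x ∈ ℝⁿ. -/
/-- Invariance condition for a convex sublevel set `S = {x | g(x) ≤ 0}` (with a Slater
point) under a discrete system `x_{k+1} = f(x_k)`, assuming `g ∘ f` is concave. -/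
theorem stmt_5 {n : ℕ} (g : (Fin n → ℝ) → ℝ) (hg : ConvexOn ℝ Set.univ g)
    (hslater : ∃ x0 : Fin n → ℝ, g x0 < 0)
    (S : Set (Fin n → ℝ)) (hS : S = {x | g x ≤ 0})
    (f : (Fin n → ℝ) → (Fin n → ℝ))
    (hconc : ConcaveOn ℝ Set.univ (fun x : Fin n → ℝ => g (f x))) :
    (∀ x ∈ S, f x ∈ S) ↔
      ∃ α : ℝ, 0 ≤ α ∧ ∀ x : Fin n → ℝ, 0 ≤ α * g x - g (f x) := by
  subst hS
  constructor
  · intro hinv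
    obtain ⟨x0, hx0⟩ := hslater
    -- the convex set A
    set A : Set (ℝ × ℝ) := {p | ∃ x, g x ≤ p.1 ∧ p.2 ≤ g (f x)} with hA
    have hAconv : Convex ℝ A := by
      rintro p ⟨x, hx1, hx2⟩ q ⟨y, hy1, hy2⟩ a b ha hb hab
      refine ⟨a • x + b • y, ?_, ?_⟩
      · have h1 := hg.2 (Set.mem_univ x) (Set.mem_univ y) ha hb hab
        simp only [smul_eq_mul] at h1
        calc g (a • x + b • y) ≤ a * g x + b * g y := h1
          _ ≤ a * p.1 + b * q.1 := by gcongr <;> assumption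
      · have h2 := hconc.2 (Set.mem_univ x) (Set.mem_univ y) ha hb hab
        simp only [smul_eq_mul] at h2
        calc (a • p + b • q).2 = a * p.2 + b * q.2 := rfl
          _ ≤ a * g (f x) + b * g (f y) := by gcongr <;> assumption
          _ ≤ g (f (a • x + b • y)) := h2
    -- the open convex set B
    set B : Set (ℝ × ℝ) := Set.Iio (0:ℝ) ×ˢ Set.Ioi (0:ℝ) with hB
    have hBopen : IsOpen B := (isOpen_Iio).prod (isOpen_Ioi)
    have hBconv : Convex ℝ B := (convex_Iio 0).prod (convex_Ioi 0)
    have hdisj : Disjoint B A := by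
      rw [Set.disjoint_left]
      rintro p ⟨hp1, hp2⟩ ⟨x, hx1, hx2⟩
      simp only [Set.mem_Iio] at hp1
      simp only [Set.mem_Ioi] at hp2
      have hgx : g x ≤ 0 := le_of_lt (lt_of_le_of_lt hx1 hp1)
      have hfx := hinv x hgx
      simp only [Set.mem_setOf_eq] at hfx
      linarith
    obtain ⟨L, c, hLB, hLA⟩ := geometric_hahn_banach_open hBconv hBopen hAconv hdisj
    set lam : ℝ := L (1, 0) with hlam
    set mu : ℝ := L (0, 1) with hmu
    have hLval : ∀ p : ℝ × ℝ, L p = p.1 * lam + p.2 * mu := by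
      intro p
      have hp : p = p.1 • ((1:ℝ), (0:ℝ)) + p.2 • ((0:ℝ), (1:ℝ)) := by
        ext <;> simp
      conv_lhs => rw [hp]
      rw [map_add, map_smul, map_smul]
      simp [hlam, hmu, smul_eq_mul]
    have hBval : ∀ u v : ℝ, u < 0 → 0 < v → u * lam + v * mu < c := by
      intro u v hu hv
      have := hLB (u, v) ⟨hu, hv⟩
      rwa [hLval] at this
    have hAval : ∀ x, c ≤ g x * lam + g (f x) * mu := by
      intro x
      have := hLA (g x, g (f x)) ⟨x, le_refl _, le_refl _⟩
      rwa [hLval] at this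
    -- lam ≥ 0
    have hlam0 : 0 ≤ lam := by
      by_contra h
      push_neg at h
      set u : ℝ := min (-1) ((c - mu) / lam) with hu
      have hu0 : u < 0 := lt_of_le_of_lt (min_le_left _ _) (by norm_num)
      have hule : u ≤ (c - mu) / lam := min_le_right _ _
      have hcl : (c - mu) / lam * lam = c - mu := div_mul_cancel₀ _ (ne_of_lt h)
      have hb := hBval u 1 hu0 one_pos
      nlinarith [mul_le_mul_of_nonpos_right hule h.le]
    -- mu ≤ 0
    have hmu0 : mu ≤ 0 := by
      by_contra h
      push_neg at h
      set v : ℝ := max 1 ((c + lam) / mu) with hv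
      have hv0 : 0 < v := lt_of_lt_of_le one_pos (le_max_left _ _)
      have hvle : (c + lam) / mu ≤ v := le_max_right _ _
      have hcl : (c + lam) / mu * mu = c + lam := div_mul_cancel₀ _ (ne_of_gt h)
      have hb := hBval (-1) v (by norm_num) hv0
      nlinarith [mul_le_mul_of_nonneg_right hvle h.le]
    -- c ≥ 0
    have hc0 : 0 ≤ c := by
      by_contra h
      push_neg at h
      rcases eq_or_lt_of_le (show mu - lam ≤ 0 by linarith) with heq | hlt
      · have hb := hBval (-1) 1 (by norm_num) one_pos
        have : lam = mu := by linarith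
        nlinarith
      · set e : ℝ := c / (2 * (mu - lam)) with he
        have hep : 0 < e := div_pos_of_neg_of_neg h (by linarith)
        have hne : (2 * (mu - lam)) ≠ 0 := ne_of_lt (by linarith)
        have hcancel : c / (2 * (mu - lam)) * (2 * (mu - lam)) = c :=
          div_mul_cancel₀ c hne
        have hb := hBval (-e) e (by linarith) hep
        nlinarith [hcancel, hb]
    -- mu < 0
    have hmuneg : mu < 0 := by
      rcases eq_or_lt_of_le hmu0 with heq | hlt
      · exfalso
        have hx0A := hAval x0
        rw [heq] at hx0A
        have hlamle : lam ≤ 0 := by nlinarith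
        have hlamz : lam = 0 := le_antisymm hlamle hlam0
        have hb := hBval (-1) 1 (by norm_num) one_pos
        rw [hlamz] at hx0A
        rw [hlamz, heq] at hb
        simp at hx0A hb
        linarith
      · exact hlt
    have hmne : -mu ≠ 0 := by linarith
    refine ⟨lam / (-mu), div_nonneg hlam0 (by linarith), ?_⟩
    intro x
    have hx := hAval x
    have key : lam / (-mu) * g x - g (f x) = (g x * lam + g (f x) * mu) / (-mu) := by
      rw [eq_div_iff hmne]
      have h1 : lam / (-mu) * (-mu) = lam := div_mul_cancel₀ _ hmne
      linear_combination g x * h1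
    rw [key]
    exact div_nonneg (le_trans hc0 hx) (by linarith)
  · rintro ⟨α, hα, hineq⟩ x hx
    simp only [Set.mem_setOf_eq] at hx ⊢
    have := hineq x
    nlinarith
end

section
/- Let g : ℝⁿ → ℝ and h : ℝⁿ → ℝ be quadratic functions, i.e., g(x) = xᵀPx + pᵀx + c and h(x) = xᵀRx + rᵀx + d for symmetric matrices P, R, vectors p, r and scalars c, d. Let f : ℝⁿ → ℝⁿ satisfy h(x) = g(f(x)) for all x, suppose there exists x⁰ with g(x⁰) < 0, and let S = {x ∈ ℝⁿ : g(x) ≤ 0}. Then S is an invariant set for the discrete system x_{k+1} = f(x_k) (i.e., f(S) ⊆ S) if and only if there exists α ≥ 0 such that α·g(x) − g(f(x)) ≥ 0 for all x ∈ ℝⁿ. -/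
open Matrix

noncomputable section SLemmaAuxSec

namespace SLemmaAux

set_option maxHeartbeats 1000000


/-- A function is a quadratic form (in the weak sense needed here). -/
def IsQF {V : Type*} [AddCommGroup V] [Module ℝ V] (Q : V → ℝ) : Prop :=
  ∀ x y : V, ∃ B : ℝ, ∀ u v : ℝ,
    Q (u • x + v • y) = u ^ 2 * Q x + 2 * u * v * B + v ^ 2 * Q y

lemma IsQF.map_smul {V : Type*} [AddCommGroup V] [Module ℝ V] {Q : V → ℝ}
    (hQ : IsQF Q) (c : ℝ) (x : V) : Q (c • x) = c ^ 2 * Q x := by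
  obtain ⟨B, hB⟩ := hQ x x
  have := hB c 0
  simpa using this

lemma IsQF.map_zero {V : Type*} [AddCommGroup V] [Module ℝ V] {Q : V → ℝ}
    (hQ : IsQF Q) : Q 0 = 0 := by
  have := hQ.map_smul 0 0
  simpa using this

/-- Square root extraction on ℝ²: every pair is of the form `(u²-v², 2uv)`. -/
lemma sq_surj (w1 w2 : ℝ) :
    ∃ u v : ℝ, u ^ 2 - v ^ 2 = w1 ∧ 2 * u * v = w2 ∧
      u ^ 2 + v ^ 2 = Real.sqrt (w1 ^ 2 + w2 ^ 2) := by
  set ρ := Real.sqrt (w1 ^ 2 + w2 ^ 2) with hρ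
  have hρsq : ρ ^ 2 = w1 ^ 2 + w2 ^ 2 := Real.sq_sqrt (by positivity)
  have habs : |w1| ≤ ρ := by
    rw [← Real.sqrt_sq_eq_abs]
    exact Real.sqrt_le_sqrt (by nlinarith [sq_nonneg w2])
  have h1 : 0 ≤ (ρ + w1) / 2 := by have := neg_abs_le w1; linarith
  have h2 : 0 ≤ (ρ - w1) / 2 := by have := le_abs_self w1; linarith
  refine ⟨Real.sqrt ((ρ + w1) / 2),
    (if w2 < 0 then -1 else 1) * Real.sqrt ((ρ - w1) / 2), ?_, ?_, ?_⟩
  · rw [mul_pow, Real.sq_sqrt h1, Real.sq_sqrt h2]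
    have : (if w2 < 0 then (-1 : ℝ) else 1) ^ 2 = 1 := by split <;> norm_num
    rw [this]; ring
  · have hmul : Real.sqrt ((ρ + w1) / 2) * Real.sqrt ((ρ - w1) / 2)
        = Real.sqrt ((w2 / 2) ^ 2) := by
      rw [← Real.sqrt_mul h1]
      congr 1
      nlinarith [hρsq]
    rw [Real.sqrt_sq_eq_abs] at hmul
    rcases lt_or_ge w2 0 with hw | hw
    · simp only [if_pos hw]
      rw [show 2 * (Real.sqrt ((ρ + w1) / 2)) * (-1 * Real.sqrt ((ρ - w1) / 2))
          = -2 * (Real.sqrt ((ρ + w1) / 2) * Real.sqrt ((ρ - w1) / 2)) by ring, hmul]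
      rw [abs_of_nonpos (by linarith : w2 / 2 ≤ 0)]
      ring
    · simp only [if_neg (not_lt.2 hw)]
      rw [show 2 * (Real.sqrt ((ρ + w1) / 2)) * (1 * Real.sqrt ((ρ - w1) / 2))
          = 2 * (Real.sqrt ((ρ + w1) / 2) * Real.sqrt ((ρ - w1) / 2)) by ring, hmul]
      rw [abs_of_nonneg (by linarith : 0 ≤ w2 / 2)]
      ring
  · rw [mul_pow, Real.sq_sqrt h1, Real.sq_sqrt h2]
    have : (if w2 < 0 then (-1 : ℝ) else 1) ^ 2 = 1 := by split <;> norm_num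
    rw [this]; ring



set_option maxHeartbeats 800000

/-- 2-dimensional Dines lemma: convex combinations of values of a pair of binary
quadratic forms are attained. -/
lemma dines2exists (A₁ B₁ C₁ A₂ B₂ C₂ t t' : ℝ) (ht : 0 ≤ t) (ht' : 0 ≤ t')
    (hsum : t + t' = 1) :
    ∃ u v : ℝ,
      u ^ 2 * A₁ + 2 * u * v * B₁ + v ^ 2 * C₁ = t * A₁ + t' * C₁ ∧
      u ^ 2 * A₂ + 2 * u * v * B₂ + v ^ 2 * C₂ = t * A₂ + t' * C₂ := by
  set a1 := (A₁ + C₁) / 2 with ha1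
  set m11 := (A₁ - C₁) / 2 with hm11
  set m12 := B₁ with hm12
  set a2 := (A₂ + C₂) / 2 with ha2
  set m21 := (A₂ - C₂) / 2 with hm21
  set m22 := B₂ with hm22
  set e := t - t' with hedef
  have he : e ^ 2 ≤ 1 := by nlinarith
  suffices h : ∃ q1 q2 : ℝ,
      a1 * Real.sqrt (q1 ^ 2 + q2 ^ 2) + m11 * q1 + m12 * q2 = a1 + m11 * e ∧
      a2 * Real.sqrt (q1 ^ 2 + q2 ^ 2) + m21 * q1 + m22 * q2 = a2 + m21 * e by
    obtain ⟨q1, q2, h1, h2⟩ := h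
    obtain ⟨u, v, hw1, hw2, hw3⟩ := sq_surj q1 q2
    rw [← hw3] at h1 h2
    refine ⟨u, v, ?_, ?_⟩
    · linear_combination h1 + m11 * hw1 + m12 * hw2 - ((A₁ + C₁) / 2) * hsum
    · linear_combination h2 + m21 * hw1 + m22 * hw2 - ((A₂ + C₂) / 2) * hsum
  by_cases hdet : m11 * m22 - m12 * m21 = 0
  · -- singular case: find kernel vector k
    obtain ⟨k1, k2, hk0, hk1, hk2⟩ : ∃ k1 k2 : ℝ, 0 < k1 ^ 2 + k2 ^ 2 ∧
        m11 * k1 + m12 * k2 = 0 ∧ m21 * k1 + m22 * k2 = 0 := by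
      by_cases h11 : m11 = 0 ∧ m12 = 0
      · by_cases h21 : m21 = 0 ∧ m22 = 0
        · exact ⟨1, 0, by norm_num, by simp [h11.1, h11.2], by simp [h21.1, h21.2]⟩
        · refine ⟨m22, -m21, ?_, by simp [h11.1, h11.2], by ring⟩
          rcases not_and_or.mp h21 with h | h
          · nlinarith [mul_self_pos.mpr h, sq_nonneg m22]
          · nlinarith [mul_self_pos.mpr h, sq_nonneg m21]
      · refine ⟨m12, -m11, ?_, by ring, by linear_combination -hdet⟩
        rcases not_and_or.mp h11 with h | h
        · nlinarith [mul_self_pos.mpr h, sq_nonneg m12]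
        · nlinarith [mul_self_pos.mpr h, sq_nonneg m11]
    set nk := Real.sqrt (k1 ^ 2 + k2 ^ 2) with hnkdef
    have hnk : 0 < nk := Real.sqrt_pos.mpr hk0
    have hnksq : nk ^ 2 = k1 ^ 2 + k2 ^ 2 := Real.sq_sqrt hk0.le
    set σ : ℝ := if 0 ≤ e * k1 then 1 else -1 with hσdef
    have hσ2 : σ ^ 2 = 1 := by rw [hσdef]; split <;> norm_num
    have hσe : 0 ≤ σ * (e * k1) := by
      rw [hσdef]; split
      · simpa
      · rename_i hcon; push_neg at hcon; nlinarith
    set T := σ / nk with hTdef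
    have hTsq : T ^ 2 * (k1 ^ 2 + k2 ^ 2) = 1 := by
      rw [hTdef, div_pow, hσ2, ← hnksq]
      field_simp
    have hTe : 0 ≤ T * (e * k1) := by
      rw [hTdef, div_mul_eq_mul_div]
      exact div_nonneg hσe hnk.le
    have h0 : (e + 0 * k1) ^ 2 + (0 * k2) ^ 2 ≤ 1 := by nlinarith
    have hT' : 1 ≤ (e + T * k1) ^ 2 + (T * k2) ^ 2 := by nlinarith [sq_nonneg e]
    have hcont : Continuous fun τ : ℝ => (e + τ * k1) ^ 2 + (τ * k2) ^ 2 := by fun_prop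
    obtain ⟨τ, -, hτ⟩ := intermediate_value_uIcc (f := fun τ : ℝ =>
        (e + τ * k1) ^ 2 + (τ * k2) ^ 2) (a := 0) (b := T) hcont.continuousOn
      (Set.mem_uIcc.mpr (Or.inl ⟨h0, hT'⟩))
    simp only [] at hτ
    refine ⟨e + τ * k1, τ * k2, ?_, ?_⟩ <;> rw [hτ, Real.sqrt_one]
    · linear_combination τ * hk1
    · linear_combination τ * hk2
  · -- invertible case
    have hb1 : m11 * ((m22 * a1 - m12 * a2) / (m11 * m22 - m12 * m21))
        + m12 * ((m11 * a2 - m21 * a1) / (m11 * m22 - m12 * m21)) = a1 := by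
      field_simp
      ring
    have hb2 : m21 * ((m22 * a1 - m12 * a2) / (m11 * m22 - m12 * m21))
        + m22 * ((m11 * a2 - m21 * a1) / (m11 * m22 - m12 * m21)) = a2 := by
      calc _ = (m21 * (m22 * a1 - m12 * a2) + m22 * (m11 * a2 - m21 * a1))
            / (m11 * m22 - m12 * m21) := by ring
        _ = a2 := by rw [div_eq_iff hdet]; ring
    set b1 := (m22 * a1 - m12 * a2) / (m11 * m22 - m12 * m21) with hb1def
    set b2 := (m11 * a2 - m21 * a1) / (m11 * m22 - m12 * m21) with hb2def
    have hΦ1 : (e + (1 - 1) * b1) ^ 2 + ((1 - 1) * b2) ^ 2 - 1 ^ 2 ≤ 0 := by nlinarith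
    have hΦ0 : 0 ≤ (e + (1 - 0) * b1) ^ 2 + ((1 - 0) * b2) ^ 2 - (0 : ℝ) ^ 2 := by
      norm_num; positivity
    have hcont : Continuous fun lam : ℝ =>
        (e + (1 - lam) * b1) ^ 2 + ((1 - lam) * b2) ^ 2 - lam ^ 2 := by fun_prop
    obtain ⟨lam, hlam, hτ⟩ := intermediate_value_Icc' (f := fun lam : ℝ =>
        (e + (1 - lam) * b1) ^ 2 + ((1 - lam) * b2) ^ 2 - lam ^ 2)
      zero_le_one hcont.continuousOn ⟨hΦ1, hΦ0⟩
    simp only [] at hτ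
    have hq : (e + (1 - lam) * b1) ^ 2 + ((1 - lam) * b2) ^ 2 = lam ^ 2 := by
      linarith [hτ]
    refine ⟨e + (1 - lam) * b1, (1 - lam) * b2, ?_, ?_⟩ <;>
      rw [hq, Real.sqrt_sq hlam.1]
    · linear_combination (1 - lam) * hb1
    · linear_combination (1 - lam) * hb2


set_option maxHeartbeats 800000

variable {V : Type*} [AddCommGroup V] [Module ℝ V]

/-- Dines' theorem: the joint range of two quadratic forms is convex. -/
lemma dines {G H : V → ℝ} (hG : IsQF G) (hH : IsQF H) :
    Convex ℝ {w : ℝ × ℝ | ∃ z : V, w = (G z, H z)} := by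
  rintro w ⟨z1, rfl⟩ w' ⟨z2, rfl⟩ t t' ht ht' hsum
  obtain ⟨B₁, hB₁⟩ := hG z1 z2
  obtain ⟨B₂, hB₂⟩ := hH z1 z2
  obtain ⟨u, v, h1, h2⟩ := dines2exists (G z1) B₁ (G z2) (H z1) B₂ (H z2) t t' ht ht' hsum
  refine ⟨u • z1 + v • z2, ?_⟩
  rw [hB₁ u v, hB₂ u v, Prod.smul_mk, Prod.smul_mk, Prod.mk_add_mk, h1, h2]
  simp [smul_eq_mul]

/-- Homogeneous S-lemma. -/
lemma slemma_core {G H : V → ℝ} (hG : IsQF G) (hH : IsQF H)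
    (himp : ∀ z, G z ≤ 0 → H z ≤ 0) (hslater : ∃ z, G z < 0) :
    ∃ α : ℝ, 0 ≤ α ∧ ∀ z, 0 ≤ α * G z - H z := by
  set W : Set (ℝ × ℝ) := {w | ∃ z : V, w = (G z, H z)} with hWdef
  have hWconv : Convex ℝ W := dines hG hH
  set C : Set (ℝ × ℝ) := {w | w.1 < 0} ∩ {w | 0 < w.2} with hCdef
  have hCopen : IsOpen C :=
    (isOpen_lt continuous_fst continuous_const).inter
      (isOpen_lt continuous_const continuous_snd)
  have hCconv : Convex ℝ C := by
    apply Convex.inter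
    · exact convex_halfSpace_lt (LinearMap.isLinear (LinearMap.fst ℝ ℝ ℝ)) 0
    · exact convex_halfSpace_gt (LinearMap.isLinear (LinearMap.snd ℝ ℝ ℝ)) 0
  have hdisj : Disjoint C W := by
    rw [Set.disjoint_left]
    rintro w ⟨hw1, hw2⟩ ⟨z, rfl⟩
    exact absurd (himp z (le_of_lt hw1)) (not_le.mpr hw2)
  obtain ⟨φ, u, hC, hW⟩ := geometric_hahn_banach_open hCconv hCopen hWconv hdisj
  set a := φ (1, 0) with hadef
  set b := φ (0, 1) with hbdef
  have hdecomp : ∀ x y : ℝ, φ (x, y) = x * a + y * b := by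
    intro x y
    have hxy : (x, y) = x • ((1 : ℝ), (0 : ℝ)) + y • ((0 : ℝ), (1 : ℝ)) := by
      simp [Prod.ext_iff]
    rw [hxy, φ.map_add, φ.map_smul, φ.map_smul, smul_eq_mul, smul_eq_mul, hadef, hbdef]
  have hu0 : u ≤ 0 := by
    have h0W : ((0 : ℝ), (0 : ℝ)) ∈ W := ⟨0, by rw [hG.map_zero, hH.map_zero]⟩
    have := hW _ h0W
    rwa [show ((0 : ℝ), (0 : ℝ)) = (0 : ℝ × ℝ) from rfl, map_zero] at this
  have hb0 : b ≤ 0 := by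
    by_contra hb
    push_neg at hb
    set ε := b / (2 * (|a| + 1)) with hε
    have hεpos : 0 < ε := div_pos hb (by positivity)
    have hmem : ((-ε, 1) : ℝ × ℝ) ∈ C := ⟨by simpa using hεpos, by norm_num⟩
    have := (hC _ hmem).trans_le hu0
    rw [hdecomp] at this
    have ha1 : a ≤ |a| := le_abs_self a
    have ha2 : 0 ≤ |a| := abs_nonneg a
    rw [hε] at this
    have h2 : b / (2 * (|a| + 1)) * a ≤ b / (2 * (|a| + 1)) * |a| := by
      apply mul_le_mul_of_nonneg_left ha1 (by positivity)
    have h3 : b / (2 * (|a| + 1)) * |a| < b := by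
      rw [div_mul_eq_mul_div, div_lt_iff₀ (by positivity)]
      nlinarith
    nlinarith
  have ha0 : 0 ≤ a := by
    by_contra ha
    push_neg at ha
    set ε := -a / (2 * (|b| + 1)) with hε
    have hεpos : 0 < ε := div_pos (by linarith) (by positivity)
    have hmem : ((-1, ε) : ℝ × ℝ) ∈ C := ⟨by norm_num, by simpa using hεpos⟩
    have := (hC _ hmem).trans_le hu0
    rw [hdecomp] at this
    have hb1 : -|b| ≤ b := neg_abs_le b
    have hb2 : 0 ≤ |b| := abs_nonneg b
    have h2 : ε * b ≥ ε * (-|b|) := mul_le_mul_of_nonneg_left hb1 hεpos.le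
    have h3 : ε * (-|b|) > a := by
      rw [hε, div_mul_eq_mul_div, gt_iff_lt, lt_div_iff₀ (by positivity)]
      nlinarith
    nlinarith
  have hnonneg : ∀ z, 0 ≤ a * G z + b * H z := by
    intro z
    by_contra hneg
    push_neg at hneg
    set K := a * G z + b * H z with hK
    set cc := Real.sqrt ((|u| + 1) / (-K)) with hcc
    have hccsq : cc ^ 2 = (|u| + 1) / (-K) :=
      Real.sq_sqrt (le_of_lt (div_pos (by positivity) (by linarith)))
    have hmemW : ((G (cc • z), H (cc • z)) : ℝ × ℝ) ∈ W := ⟨cc • z, rfl⟩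
    have h2 := hW _ hmemW
    rw [hdecomp, hG.map_smul, hH.map_smul] at h2
    have h3 : cc ^ 2 * G z * a + cc ^ 2 * H z * b = cc ^ 2 * K := by rw [hK]; ring
    rw [h3, hccsq] at h2
    have hKne : K ≠ 0 := ne_of_lt hneg
    have h4 : (|u| + 1) / (-K) * K = -(|u| + 1) := by
      rw [div_mul_eq_mul_div, mul_div_assoc, div_neg, div_self hKne]
      ring
    rw [h4] at h2
    have := neg_abs_le u
    linarith
  have hbneg : b < 0 := by
    rcases lt_or_eq_of_le hb0 with h | h
    · exact h
    · exfalso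
      obtain ⟨z0, hz0⟩ := hslater
      have h1 := hnonneg z0
      rw [h] at h1
      have h1' : 0 ≤ a * G z0 := by linarith
      have ha' : a ≤ 0 := by
        by_contra hc
        push_neg at hc
        nlinarith [mul_neg_of_pos_of_neg hc hz0]
      have ha'' : a = 0 := le_antisymm ha' ha0
      have hmem : ((-1, 1) : ℝ × ℝ) ∈ C := ⟨by norm_num, by norm_num⟩
      have h5 := (hC _ hmem).trans_le hu0
      rw [hdecomp] at h5
      rw [ha'', h] at h5
      norm_num at h5
  refine ⟨a / (-b), div_nonneg ha0 (by linarith), fun z => ?_⟩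
  have h1 := hnonneg z
  have hbpos : 0 < -b := by linarith
  have heq : a / (-b) * G z - H z = (a * G z + b * H z) / (-b) := by
    field_simp [hbneg.ne]
    ring
  rw [heq]
  exact div_nonneg h1 hbpos.le


set_option maxHeartbeats 800000

/-- Homogenization of an inhomogeneous quadratic function. -/
def homog {n : ℕ} (P : Matrix (Fin n) (Fin n) ℝ) (p : Fin n → ℝ) (c : ℝ) :
    (Fin n → ℝ) × ℝ → ℝ :=
  fun z => z.1 ⬝ᵥ P.mulVec z.1 + z.2 * (p ⬝ᵥ z.1) + c * z.2 ^ 2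

lemma homog_isQF {n : ℕ} (P : Matrix (Fin n) (Fin n) ℝ) (p : Fin n → ℝ) (c : ℝ) :
    IsQF (homog P p c) := by
  intro z w
  refine ⟨(z.1 ⬝ᵥ P.mulVec w.1 + w.1 ⬝ᵥ P.mulVec z.1 + z.2 * (p ⬝ᵥ w.1)
    + w.2 * (p ⬝ᵥ z.1)) / 2 + c * z.2 * w.2, ?_⟩
  intro u v
  simp only [homog, Prod.fst_add, Prod.snd_add, Prod.smul_fst, Prod.smul_snd, smul_eq_mul,
    mulVec_add, mulVec_smul, dotProduct_add, add_dotProduct, dotProduct_smul, smul_dotProduct,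
    smul_eq_mul]
  ring


end SLemmaAux

end SLemmaAuxSec

open SLemmaAux

/-- Invariance condition for the sublevel set of a quadratic function `g` under a discrete
system `x_{k+1} = f(x_k)` such that `g ∘ f` is also quadratic; no concavity of `g ∘ f`
is assumed (the S-lemma version). -/
theorem stmt_6 {n : ℕ} (P R : Matrix (Fin n) (Fin n) ℝ) (hP : P.IsSymm) (hR : R.IsSymm)
    (p r : Fin n → ℝ) (c d : ℝ)
    (g h : (Fin n → ℝ) → ℝ)
    (hgdef : ∀ x : Fin n → ℝ, g x = x ⬝ᵥ P.mulVec x + p ⬝ᵥ x + c)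
    (hhdef : ∀ x : Fin n → ℝ, h x = x ⬝ᵥ R.mulVec x + r ⬝ᵥ x + d)
    (f : (Fin n → ℝ) → (Fin n → ℝ))
    (hcomp : ∀ x : Fin n → ℝ, h x = g (f x))
    (hslater : ∃ x0 : Fin n → ℝ, g x0 < 0)
    (S : Set (Fin n → ℝ)) (hS : S = {x | g x ≤ 0}) :
    (∀ x ∈ S, f x ∈ S) ↔
      ∃ α : ℝ, 0 ≤ α ∧ ∀ x : Fin n → ℝ, 0 ≤ α * g x - g (f x) := by
  constructor
  · intro hInv
    have hg' : ∀ y, g y ≤ 0 → g (f y) ≤ 0 := by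
      intro y hy
      have := hInv y (by rw [hS]; exact hy)
      rwa [hS] at this
    have hGq : IsQF (homog P p c) := homog_isQF P p c
    have hHq : IsQF (homog R r d) := homog_isQF R r d
    have hG1 : ∀ x, homog P p c (x, 1) = g x := by
      intro x; rw [hgdef]; simp [homog]
    have hH1 : ∀ x, homog R r d (x, 1) = g (f x) := by
      intro x; rw [← hcomp, hhdef]; simp [homog]
    have himp : ∀ z, homog P p c z ≤ 0 → homog R r d z ≤ 0 := by
      rintro ⟨x, t⟩ hz
      by_cases ht : t = 0
      · subst ht
        by_contra hpos
        push_neg at hpos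
        obtain ⟨x0, hx0⟩ := hslater
        obtain ⟨B, hB⟩ := hGq (x0, 1) (x, 0)
        obtain ⟨B', hB'⟩ := hHq (x0, 1) (x, 0)
        set K := homog R r d (x, 0) with hK
        set s0 : ℝ := max 1 ((2 * |B'| + |homog R r d (x0, 1)| + 1) / K) with hs0
        have hs1 : 1 ≤ s0 := le_max_left _ _
        have hs2 : (2 * |B'| + |homog R r d (x0, 1)| + 1) / K ≤ s0 := le_max_right _ _
        have hs2' : 2 * |B'| + |homog R r d (x0, 1)| + 1 ≤ s0 * K := by
          rw [div_le_iff₀ hpos] at hs2; linarith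
        set σ : ℝ := if 0 ≤ B then -1 else 1 with hσ
        have hσB : σ * B ≤ 0 := by
          rw [hσ]; split
          · rename_i hB0; nlinarith
          · rename_i hB0; push_neg at hB0; nlinarith
        have hσsq : σ ^ 2 = 1 := by rw [hσ]; split <;> norm_num
        have hvec : (1 : ℝ) • ((x0, 1) : (Fin n → ℝ) × ℝ) + (σ * s0) • (x, 0)
            = (x0 + (σ * s0) • x, 1) := by
          simp [Prod.ext_iff]
        have hgle : g (x0 + (σ * s0) • x) ≤ 0 := by
          rw [← hG1, ← hvec, hB 1 (σ * s0)]
          have h1 : (σ * s0) ^ 2 * homog P p c (x, 0) ≤ 0 :=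
            mul_nonpos_of_nonneg_of_nonpos (sq_nonneg _) hz
          have h2 : 2 * 1 * (σ * s0) * B ≤ 0 := by
            have : 2 * 1 * (σ * s0) * B = 2 * s0 * (σ * B) := by ring
            rw [this]
            exact mul_nonpos_of_nonneg_of_nonpos (by linarith) hσB
          rw [hG1]
          nlinarith
        have hHle : homog R r d (x0 + (σ * s0) • x, 1) ≤ 0 := by
          rw [hH1]
          exact hg' _ hgle
        rw [← hvec, hB' 1 (σ * s0)] at hHle
        have hexp : 1 ^ 2 * homog R r d (x0, 1) + 2 * 1 * (σ * s0) * B'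
            + (σ * s0) ^ 2 * homog R r d (x, 0)
            = homog R r d (x0, 1) + 2 * s0 * (σ * B') + s0 ^ 2 * K := by
          linear_combination (s0 ^ 2 * K) * hσsq
        rw [hexp] at hHle
        have hB'1 : -|B'| ≤ σ * B' := by
          rw [hσ]; split
          · nlinarith [neg_abs_le B', le_abs_self B']
          · nlinarith [neg_abs_le B', le_abs_self B']
        have hH01 : -|homog R r d (x0, 1)| ≤ homog R r d (x0, 1) := neg_abs_le _
        have hprod : s0 * (2 * |B'| + |homog R r d (x0, 1)| + 1) ≤ s0 * (s0 * K) :=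
          mul_le_mul_of_nonneg_left hs2' (by linarith)
        nlinarith [mul_le_mul_of_nonneg_left hB'1 (by linarith : (0:ℝ) ≤ 2 * s0),
          abs_nonneg B', abs_nonneg (homog R r d (x0, 1))]
      · have ht2 : 0 < t ^ 2 := lt_of_le_of_ne (sq_nonneg t) (Ne.symm (pow_ne_zero 2 ht))
        have hzt : ((x, t) : (Fin n → ℝ) × ℝ) = t • ((t⁻¹ • x, 1)) := by
          simp [Prod.ext_iff, smul_smul, mul_inv_cancel₀ ht]
        rw [hzt, hGq.map_smul] at hz
        rw [hzt, hHq.map_smul]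
        have hgle : g (t⁻¹ • x) ≤ 0 := by
          rw [← hG1]
          nlinarith
        have := hg' _ hgle
        rw [← hH1 (t⁻¹ • x)] at this
        exact mul_nonpos_of_nonneg_of_nonpos ht2.le this
    have hsl : ∃ z, homog P p c z < 0 := by
      obtain ⟨x0, hx0⟩ := hslater
      exact ⟨(x0, 1), by rw [hG1]; exact hx0⟩
    obtain ⟨α, hα, hineq⟩ := slemma_core hGq hHq himp hsl
    refine ⟨α, hα, fun x => ?_⟩
    have := hineq (x, 1)
    rwa [hG1, hH1] at this
  · rintro ⟨α, hα, hineq⟩ x hx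
    rw [hS] at hx ⊢
    simp only [Set.mem_setOf_eq] at hx ⊢
    have h1 := hineq x
    have h2 : α * g x ≤ 0 := mul_nonpos_of_nonneg_of_nonpos hα hx
    linarith
end

section
/- Let f : ℝⁿ → ℝⁿ be Lipschitz continuous, let g₁,…,g_m ∈ ℝⁿ and b ∈ ℝ^m with b > 0 componentwise, and let P = {x ∈ ℝⁿ : g_iᵀx ≤ b_i for all i ∈ {1,…,m}}. For each i set Pⁱ = {x ∈ P : g_iᵀx = b_i}. Then P is an invariant set for the continuous system ẋ(t) = f(x(t)) if and only if for every i ∈ {1,…,m} and every x ∈ Pⁱ one has g_iᵀ f(x) ≤ 0. -/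
open Matrix Set Filter Topology
open scoped NNReal

lemma dot_hasDerivAt {n : ℕ} (g : Fin n → ℝ) {x : ℝ → (Fin n → ℝ)} {v : Fin n → ℝ} {t : ℝ}
    (hx : HasDerivAt x v t) : HasDerivAt (fun s => g ⬝ᵥ x s) (g ⬝ᵥ v) t := by
  simp only [dotProduct]
  exact HasDerivAt.fun_sum fun j _ => ((hasDerivAt_pi.1 hx) j).const_mul (g j)

lemma abs_dot_le {n : ℕ} (g v : Fin n → ℝ) : |g ⬝ᵥ v| ≤ (∑ j, |g j|) * ‖v‖ := by
  rw [dotProduct, Finset.sum_mul]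
  refine (Finset.abs_sum_le_sum_abs _ _).trans (Finset.sum_le_sum fun j _ => ?_)
  rw [abs_mul]
  exact mul_le_mul_of_nonneg_left (norm_le_pi_norm v j) (abs_nonneg _)

lemma exists_uniform_step {n : ℕ} {f : (Fin n → ℝ) → (Fin n → ℝ)} {K : ℝ≥0}
    (hK : LipschitzWith K f) (hK1 : 1 ≤ (K : ℝ)) :
    ∃ T > (0:ℝ), ∀ (c : ℝ) (y : Fin n → ℝ), ∃ x : ℝ → Fin n → ℝ, x c = y ∧
      ∀ t ∈ Icc (c - T) (c + T), HasDerivWithinAt x (f (x t)) (Icc (c - T) (c + T)) t := by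
  set A : ℝ := ‖f 0‖ + 1 with hA
  have hA1 : 1 ≤ A := le_add_of_nonneg_left (norm_nonneg _)
  set T : ℝ := min (1 / (A + K)) (1 / (2 * K)) with hT
  have hK0 : (0:ℝ) < K := by linarith
  have hAK : (0:ℝ) < A + K := by linarith
  have hT0 : 0 < T := lt_min (by positivity) (by positivity)
  refine ⟨T, hT0, fun c y => ?_⟩
  have h1 : T * (A + K) ≤ 1 := by
    have h : T ≤ 1 / (A + K) := min_le_left _ _
    calc T * (A+K) ≤ (1/(A+K)) * (A+K) := by nlinarith
    _ = 1 := by field_simp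
  have h2 : T * (2 * K) ≤ 1 := by
    have h : T ≤ 1 / (2*K) := min_le_right _ _
    calc T * (2*K) ≤ (1/(2*K)) * (2*K) := by nlinarith
    _ = 1 := by field_simp
  have hc : c ∈ Icc (c - T) (c + T) := ⟨by linarith, by linarith⟩
  have hpl : IsPicardLindelof (fun _ : ℝ => f) (⟨c, hc⟩ : Icc (c - T) (c + T)) y (‖y‖₊ + 1) 0
      (‖f 0‖₊ + 1 + K * (2 * ‖y‖₊ + 1)) K := by
    apply IsPicardLindelof.of_time_independent
    · intro z hz
      have hzy : ‖z - y‖ ≤ ‖y‖ + 1 := by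
        simpa [dist_eq_norm] using Metric.mem_closedBall.1 hz
      have hz' : ‖z‖ ≤ 2 * ‖y‖ + 1 := by
        have := norm_sub_norm_le z y
        linarith
      have hfz : ‖f z - f 0‖ ≤ K * ‖z‖ := by
        have := hK.dist_le_mul z 0
        simpa [dist_eq_norm] using this
      have := norm_sub_norm_le (f z) (f 0)
      have : ‖f z‖ ≤ ‖f 0‖ + K * ‖z‖ := by linarith
      have hkz : (K:ℝ) * ‖z‖ ≤ K * (2*‖y‖+1) := by nlinarith
      push_cast
      linarith
    · exact hK.lipschitzOnWith
    · simp only [NNReal.coe_zero, sub_zero, tsub_zero]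
      have hmax : max ((c+T) - c) (c - (c-T)) = T := by
        rw [add_sub_cancel_left, sub_sub_cancel, max_self]
      rw [hmax]
      push_cast
      have hy0 : (0:ℝ) ≤ ‖y‖ := norm_nonneg y
      nlinarith
  obtain ⟨x, hx0, hx⟩ := hpl.exists_eq_forall_mem_Icc_hasDerivWithinAt₀
  exact ⟨x, hx0, hx⟩
noncomputable def chainSol {E : Type*} (T : ℝ) (sol : ℝ → E → ℝ → E) (x₀ : E) : ℕ → ℝ → E
  | 0 => sol 0 x₀
  | (k+1) => fun t => if t ≤ ((k:ℝ)+1)*T then chainSol T sol x₀ k t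
      else sol (((k:ℝ)+1)*T) (chainSol T sol x₀ k (((k:ℝ)+1)*T)) t

lemma exists_global_sol {n : ℕ} {f : (Fin n → ℝ) → (Fin n → ℝ)} {K : ℝ≥0}
    (hK : LipschitzWith K f) (x₀ : Fin n → ℝ) :
    ∃ x : ℝ → Fin n → ℝ, x 0 = x₀ ∧ ∀ t : ℝ, 0 ≤ t → HasDerivAt x (f (x t)) t := by
  replace hK : LipschitzWith (max K 1) f := hK.weaken (le_max_left _ _)
  have hK1 : (1:ℝ) ≤ (max K 1 : ℝ≥0) := by
    exact_mod_cast le_max_right K 1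
  obtain ⟨T, hT0, hsol⟩ := exists_uniform_step hK hK1
  choose sol sol_init sol_deriv using fun c => hsol c
  set S : ℕ → ℝ → Fin n → ℝ := chainSol T sol x₀ with hS
  -- derivative property of each chain piece
  have P2 : ∀ k : ℕ, ∀ t ∈ Icc (-T) ((k:ℝ)*T + T),
      HasDerivWithinAt (S k) (f (S k t)) (Icc (-T) ((k:ℝ)*T + T)) t := by
    intro k
    induction k with
    | zero =>
      intro t ht
      have := sol_deriv 0 x₀ t (by simpa using ht)
      simp at this ⊢
      exact this
    | succ k IH =>
      set j : ℝ := ((k:ℝ)+1)*T with hj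
      have hjpos : 0 < j := by positivity
      have hcast : ((k+1:ℕ):ℝ)*T + T = j + T := by push_cast; ring
      have hkj : (k:ℝ)*T + T = j := by rw [hj]; ring
      set C : ℝ → Fin n → ℝ := S k with hC
      set N : ℝ → Fin n → ℝ := sol j (C j) with hN
      have hNj : N j = C j := sol_init j (C j)
      have hsl : ∀ z : ℝ, z ≤ j → S (k+1) z = C z := fun z hz => if_pos hz
      have hsr : ∀ z : ℝ, ¬ z ≤ j → S (k+1) z = N z := fun z hz => if_neg hz
      have hNderiv : ∀ t ∈ Icc (j - T) (j + T),
          HasDerivWithinAt N (f (N t)) (Icc (j-T) (j+T)) t := sol_deriv j (C j)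
      intro t ht
      rw [hcast] at ht ⊢
      rcases lt_trichotomy t j with htj | htj | htj
      · -- t < j
        have h1 : HasDerivWithinAt C (f (C t)) (Icc (-T) j) t := by
          rw [← hkj]; exact IH t ⟨ht.1, by rw [hkj]; exact htj.le⟩
        have heq : S (k+1) =ᶠ[𝓝 t] C := by
          filter_upwards [Iio_mem_nhds htj] with z hz
          exact hsl z (le_of_lt hz)
        have h2 : HasDerivWithinAt (S (k+1)) (f (C t)) (Icc (-T) j) t :=
          h1.congr_of_eventuallyEq (heq.filter_mono nhdsWithin_le_nhds) (hsl t htj.le)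
        have h3 : Icc (-T) j ∈ 𝓝[Icc (-T) (j + T)] t := by
          rw [mem_nhdsWithin]
          exact ⟨Iio j, isOpen_Iio, htj, fun z hz => ⟨hz.2.1, hz.1.le⟩⟩
        have h4 := h2.mono_of_mem_nhdsWithin h3
        rwa [hsl t htj.le]
      · -- t = j
        rw [htj, hsl j le_rfl]
        have hL : HasDerivWithinAt C (f (C j)) (Icc (-T) j) j := by
          have := IH j ⟨by linarith, by rw [hkj]⟩
          rwa [hkj] at this
        have hL' : HasDerivWithinAt C (f (C j)) (Iic j) j := by
          refine hL.mono_of_mem_nhdsWithin ?_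
          rw [mem_nhdsWithin]
          exact ⟨Ioi (-T), isOpen_Ioi, by simp only [mem_Ioi]; linarith,
            fun z hz => ⟨hz.1.le, hz.2⟩⟩
        have hLg : HasDerivWithinAt (S (k+1)) (f (C j)) (Iic j) j :=
          hL'.congr (fun z hz => hsl z hz) (hsl j le_rfl)
        have hR : HasDerivWithinAt N (f (N j)) (Icc (j-T) (j+T)) j :=
          hNderiv j ⟨by linarith, by linarith⟩
        have hR' : HasDerivWithinAt N (f (N j)) (Ici j) j := by
          refine hR.mono_of_mem_nhdsWithin ?_
          rw [mem_nhdsWithin]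
          exact ⟨Iio (j+T), isOpen_Iio, by simp only [mem_Iio]; linarith,
            fun z hz => ⟨by have := mem_Ici.1 hz.2; linarith [mem_Iio.1 hz.1], hz.1.le⟩⟩
        have hRg : HasDerivWithinAt (S (k+1)) (f (N j)) (Ici j) j := by
          refine hR'.congr (fun z hz => ?_) (by rw [hsl j le_rfl, hNj])
          rcases eq_or_lt_of_le (mem_Ici.1 hz) with h | h
          · rw [← h, hsl j le_rfl, hNj]
          · rw [hsr z (not_le.2 h)]
        rw [hNj] at hRg
        have hU := hLg.union hRg
        rw [Iic_union_Ici, hasDerivWithinAt_univ] at hU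
        exact hU.hasDerivWithinAt
      · -- j < t
        have h1 : HasDerivWithinAt N (f (N t)) (Icc (j-T) (j+T)) t :=
          hNderiv t ⟨by linarith, ht.2⟩
        have heq : S (k+1) =ᶠ[𝓝 t] N := by
          filter_upwards [Ioi_mem_nhds htj] with z hz
          exact hsr z (not_le.2 hz)
        have h2 : HasDerivWithinAt (S (k+1)) (f (N t)) (Icc (j-T) (j+T)) t :=
          h1.congr_of_eventuallyEq (heq.filter_mono nhdsWithin_le_nhds)
            (hsr t (not_le.2 htj))
        have h3 : Icc (j-T) (j+T) ∈ 𝓝[Icc (-T) (j + T)] t := by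
          rw [mem_nhdsWithin]
          exact ⟨Ioi j, isOpen_Ioi, htj, fun z hz => ⟨by linarith [mem_Ioi.1 hz.1], hz.2.2⟩⟩
        have h4 := h2.mono_of_mem_nhdsWithin h3
        rwa [hsr t (not_le.2 htj)]
  -- stabilization
  have stab : ∀ (k : ℕ) (t:ℝ), t ≤ ((k:ℝ)+1)*T → ∀ l : ℕ, k ≤ l → S l t = S k t := by
    intro k t htk l hkl
    induction l, hkl using Nat.le_induction with
    | base => rfl
    | succ l hkl IH =>
      have : t ≤ ((l:ℝ)+1)*T := by
        refine htk.trans ?_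
        have : (k:ℝ) ≤ l := by exact_mod_cast hkl
        nlinarith
      show S (l+1) t = S k t
      rw [← IH]
      show (if t ≤ ((l:ℝ)+1)*T then S l t else _) = S l t
      rw [if_pos this]
  set x : ℝ → Fin n → ℝ := fun t => S ⌈t/T⌉₊ t with hx
  have hceil : ∀ t : ℝ, t ≤ ((⌈t/T⌉₊:ℝ)+1)*T := by
    intro t
    rcases le_or_gt t 0 with h | h
    · nlinarith [show (0:ℝ) ≤ (⌈t/T⌉₊:ℝ) from Nat.cast_nonneg _]
    · have h1 : t/T ≤ (⌈t/T⌉₊:ℝ) := Nat.le_ceil _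
      have := (div_le_iff₀ hT0).1 h1
      nlinarith
  have hx_eq : ∀ (k:ℕ) (t:ℝ), t ≤ ((k:ℝ)+1)*T → x t = S k t := by
    intro k t htk
    have h1 : x t = S (max ⌈t/T⌉₊ k) t := (stab _ t (hceil t) _ (le_max_left _ _)).symm
    rw [h1, stab k t htk _ (le_max_right _ _)]
  refine ⟨x, ?_, ?_⟩
  · have : x 0 = S 0 0 := hx_eq 0 0 (by nlinarith)
    rw [this]
    exact sol_init 0 x₀
  · intro t ht
    set k : ℕ := ⌈t/T⌉₊ with hk
    have htk : t ≤ (k:ℝ)*T := by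
      rcases eq_or_lt_of_le ht with h | h
      · simp [← h, hk]
      · have h1 : t/T ≤ (k:ℝ) := Nat.le_ceil _
        have := (div_le_iff₀ hT0).1 h1
        linarith
    have htk' : t < ((k:ℝ)+1)*T := by nlinarith
    have hD : HasDerivAt (S k) (f (S k t)) t := by
      refine (P2 k t ⟨by linarith, by nlinarith⟩).hasDerivAt ?_
      exact Icc_mem_nhds (by linarith) (by nlinarith)
    have heq : x =ᶠ[𝓝 t] S k := by
      filter_upwards [Iio_mem_nhds htk'] with z hz
      exact hx_eq k z (le_of_lt hz)
    have hxt : x t = S k t := hx_eq k t htk'.le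
    rw [hxt]
    exact hD.congr_of_eventuallyEq heq
/-- Invariance condition for a polyhedron `P = {x | gᵢᵀx ≤ bᵢ}` (with `b > 0`) under a
continuous system `ẋ = f(x)` with `f` Lipschitz: `P` is invariant iff on each face
`Pⁱ = {x ∈ P : gᵢᵀx = bᵢ}` one has `gᵢᵀ f(x) ≤ 0`. -/
theorem stmt_10 {n m : ℕ} (f : (Fin n → ℝ) → (Fin n → ℝ))
    (hf : ∃ K : NNReal, LipschitzWith K f)
    (g : Fin m → (Fin n → ℝ)) (b : Fin m → ℝ) (hb : ∀ i, 0 < b i)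
    (P : Set (Fin n → ℝ)) (hP : P = {x | ∀ i : Fin m, g i ⬝ᵥ x ≤ b i}) :
    (∀ x : ℝ → (Fin n → ℝ),
        (∀ t : ℝ, 0 ≤ t → HasDerivAt x (f (x t)) t) →
        x 0 ∈ P → ∀ t : ℝ, 0 ≤ t → x t ∈ P) ↔
      (∀ i : Fin m, ∀ x ∈ P, g i ⬝ᵥ x = b i → g i ⬝ᵥ f x ≤ 0) := by
  obtain ⟨K, hK⟩ := hf
  subst hP
  constructor
  · -- invariance ⇒ face condition
    intro hinv i x₀ hx₀ hface
    obtain ⟨x, hx0, hxd⟩ := exists_global_sol hK x₀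
    have hxP : ∀ t, 0 ≤ t → x t ∈ {v | ∀ i, g i ⬝ᵥ v ≤ b i} :=
      hinv x hxd (by rwa [hx0])
    have hd : HasDerivAt (fun s => g i ⬝ᵥ x s) (g i ⬝ᵥ f x₀) 0 := by
      have := dot_hasDerivAt (g i) (hxd 0 le_rfl)
      rwa [hx0] at this
    have hslope : Tendsto (slope (fun s => g i ⬝ᵥ x s) 0) (𝓝[>] (0:ℝ)) (𝓝 (g i ⬝ᵥ f x₀)) :=
      (hasDerivWithinAt_iff_tendsto_slope' (notMem_Ioi_self)).1
        (hd.hasDerivWithinAt (s := Ioi 0))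
    refine le_of_tendsto hslope ?_
    filter_upwards [self_mem_nhdsWithin] with z hz
    have hz0 : (0:ℝ) < z := hz
    have h1 : g i ⬝ᵥ x z ≤ b i := hxP z hz0.le i
    have h2 : g i ⬝ᵥ x 0 = b i := by rw [hx0]; exact hface
    rw [slope_def_field]
    have : g i ⬝ᵥ x z - g i ⬝ᵥ x 0 ≤ 0 := by rw [h2]; linarith
    have hden : (0:ℝ) < z - 0 := by linarith
    exact div_nonpos_of_nonpos_of_nonneg this hden.le
  · intro H x hx hx0 t₁ ht₁
    rcases isEmpty_or_nonempty (Fin m) with hm | hm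
    · exact fun i => (hm.false i).elim
    by_contra hcon
    -- the scaled max functional
    set Wfun : (Fin n → ℝ) → ℝ :=
      fun v => Finset.univ.sup' Finset.univ_nonempty (fun i => g i ⬝ᵥ v / b i) with hWfun
    set W : ℝ → ℝ := fun s => Wfun (x s) with hW
    have hdotc : ∀ w : Fin n → ℝ, Continuous fun v : Fin n → ℝ => w ⬝ᵥ v := by
      intro w
      simp only [dotProduct]
      exact continuous_finset_sum _ fun j _ => (continuous_const.mul (continuous_apply j))
    have hWfun_cont : Continuous Wfun :=
      Continuous.finset_sup'_apply Finset.univ_nonempty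
        (fun i _ => (hdotc (g i)).div_const (b i))
    have hmemW : ∀ v : Fin n → ℝ, (∀ i, g i ⬝ᵥ v ≤ b i) ↔ Wfun v ≤ 1 := by
      intro v
      rw [hWfun, Finset.sup'_le_iff]
      constructor
      · intro h i _
        rw [div_le_one (hb i)]; exact h i
      · intro h i
        rw [← div_le_one (hb i)]; exact h i (Finset.mem_univ i)
    have hle_sup : ∀ (s : ℝ) i, g i ⬝ᵥ x s / b i ≤ W s := by
      intro s i
      exact Finset.le_sup' (fun i => g i ⬝ᵥ x s / b i) (Finset.mem_univ i)
    -- the last time in P before t₁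
    have hxcont : ContinuousOn x (Icc 0 t₁) :=
      fun s hs => (hx s hs.1).continuousAt.continuousWithinAt
    have hPclosed : IsClosed {v : Fin n → ℝ | ∀ i, g i ⬝ᵥ v ≤ b i} := by
      have : {v : Fin n → ℝ | ∀ i, g i ⬝ᵥ v ≤ b i} = ⋂ i, {v | g i ⬝ᵥ v ≤ b i} := by
        ext v; simp [mem_iInter]
      rw [this]
      exact isClosed_iInter fun i => isClosed_le (hdotc (g i)) continuous_const
    set A : Set ℝ := Icc 0 t₁ ∩ x ⁻¹' {v | ∀ i, g i ⬝ᵥ v ≤ b i} with hA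
    have hAclosed : IsClosed A := hxcont.preimage_isClosed_of_isClosed isClosed_Icc hPclosed
    have hAcompact : IsCompact A :=
      isCompact_Icc.of_isClosed_subset hAclosed inter_subset_left
    have hAne : A.Nonempty := ⟨0, ⟨le_rfl, ht₁⟩, hx0⟩
    set t₀ : ℝ := sSup A with ht₀
    have ht₀A : t₀ ∈ A := hAcompact.sSup_mem hAne
    have ht₀0 : 0 ≤ t₀ := ht₀A.1.1
    have ht₀t₁ : t₀ ≤ t₁ := ht₀A.1.2
    have hxt₀P : ∀ i, g i ⬝ᵥ x t₀ ≤ b i := ht₀A.2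
    have ht₀lt : t₀ < t₁ := by
      rcases eq_or_lt_of_le ht₀t₁ with h | h
      · exact absurd (fun i => by rw [← h]; exact hxt₀P i) hcon
      · exact h
    have hnotP : ∀ s, t₀ < s → s ≤ t₁ → ¬(∀ i, g i ⬝ᵥ x s ≤ b i) := by
      intro s hs hst hmem
      have : s ∈ A := ⟨⟨ht₀0.trans hs.le, hst⟩, hmem⟩
      exact absurd (le_csSup hAcompact.bddAbove this) (not_le.2 hs)
    have hW1 : ∀ s, t₀ < s → s ≤ t₁ → 1 < W s := by
      intro s hs hst
      obtain ⟨i, hi⟩ := not_forall.1 (hnotP s hs hst)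
      have : b i < g i ⬝ᵥ x s := not_le.1 hi
      calc (1:ℝ) < g i ⬝ᵥ x s / b i := (one_lt_div (hb i)).2 this
      _ ≤ W s := hle_sup s i
    -- W t₀ = 1
    have hWt₀le : W t₀ ≤ 1 := (hmemW _).1 hxt₀P
    have hWt₀ : W t₀ = 1 := by
      rcases eq_or_lt_of_le hWt₀le with h | h
      · exact h
      · exfalso
        have hWc : ContinuousAt W t₀ :=
          hWfun_cont.continuousAt.comp (hx t₀ ht₀0).continuousAt
        have hev : ∀ᶠ s in 𝓝 t₀, W s < 1 := hWc.eventually_lt_const h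
        have hev2 : ∀ᶠ s in 𝓝 t₀, s < t₁ := Filter.Tendsto.eventually_lt_const ht₀lt tendsto_id
        have hfin : ∀ᶠ s in 𝓝[>] t₀, (W s < 1 ∧ s < t₁) ∧ t₀ < s :=
          ((hev.and hev2).filter_mono nhdsWithin_le_nhds).and self_mem_nhdsWithin
        obtain ⟨s, ⟨hs1, hs2⟩, hs3⟩ := hfin.exists
        exact hnotP s hs3 hs2.le ((hmemW _).2 hs1.le)
    -- bound on ‖x‖ over [t₀,t₁]
    have hxcont' : ContinuousOn x (Icc t₀ t₁) :=
      fun s hs => (hx s (ht₀0.trans hs.1)).continuousAt.continuousWithinAt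
    obtain ⟨z₀, hz₀, -, hMz⟩ := isCompact_Icc.exists_sSup_image_eq_and_ge
      (nonempty_Icc.2 ht₀t₁) (continuous_norm.comp_continuousOn hxcont')
    set M : ℝ := ‖x z₀‖ with hM
    have hM0 : 0 ≤ M := norm_nonneg _
    have hMle : ∀ s ∈ Icc t₀ t₁, ‖x s‖ ≤ M := hMz
    -- coefficients
    set c : Fin m → ℝ := fun i => (∑ j, |g i j|) * K * M / b i with hc
    set C₀ : ℝ := Finset.univ.sup' Finset.univ_nonempty c with hC₀
    have hcC₀ : ∀ i, c i ≤ C₀ := fun i => Finset.le_sup' c (Finset.mem_univ i)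
    -- argmax sets
    set am : ℝ → Finset (Fin m) := fun s =>
      Finset.univ.filter (fun i => g i ⬝ᵥ x s / b i = W s) with ham
    have hamne : ∀ s, (am s).Nonempty := by
      intro s
      obtain ⟨i, _, hi⟩ := Finset.exists_mem_eq_sup' Finset.univ_nonempty
        (fun i => g i ⬝ᵥ x s / b i)
      exact ⟨i, Finset.mem_filter.2 ⟨Finset.mem_univ i, hi.symm⟩⟩
    set F' : ℝ → ℝ := fun s => (am s).sup' (hamne s) (fun i => g i ⬝ᵥ f (x s) / b i) with hF'
    have hphi : ∀ (i : Fin m) (s : ℝ), 0 ≤ s →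
        HasDerivAt (fun z => g i ⬝ᵥ x z / b i) (g i ⬝ᵥ f (x s) / b i) s :=
      fun i s hs => (dot_hasDerivAt (g i) (hx s hs)).div_const (b i)
    -- Gronwall hypotheses
    have hcont : ContinuousOn (fun s => W s - 1) (Icc t₀ t₁) :=
      ((hWfun_cont.comp_continuousOn hxcont').sub continuousOn_const)
    have hinit : W t₀ - 1 ≤ 0 := by rw [hWt₀]; norm_num
    have hbound : ∀ s ∈ Ico t₀ t₁, F' s ≤ C₀ * (W s - 1) + 0 := by
      intro s hs
      rw [add_zero, hF', Finset.sup'_le_iff]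
      intro i hi
      have his : g i ⬝ᵥ x s / b i = W s := (Finset.mem_filter.1 hi).2
      have hs0 : 0 ≤ s := ht₀0.trans hs.1
      have hWs1 : 1 ≤ W s := by
        rcases eq_or_lt_of_le hs.1 with h | h
        · rw [← h, hWt₀]
        · exact (hW1 s h hs.2.le).le
      have hWpos : (0:ℝ) < W s := lt_of_lt_of_le one_pos hWs1
      set y : Fin n → ℝ := (W s)⁻¹ • x s with hy
      have hyP : ∀ j, g j ⬝ᵥ y ≤ b j := by
        intro j
        have hxb : g j ⬝ᵥ x s ≤ W s * b j := by
          have := hle_sup s j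
          rwa [div_le_iff₀ (hb j)] at this
        rw [hy, dotProduct_smul, smul_eq_mul]
        calc (W s)⁻¹ * (g j ⬝ᵥ x s) ≤ (W s)⁻¹ * (W s * b j) :=
          mul_le_mul_of_nonneg_left hxb (inv_nonneg.2 hWpos.le)
        _ = b j := by field_simp
      have hyface : g i ⬝ᵥ y = b i := by
        have h1 : g i ⬝ᵥ x s = W s * b i := by
          rw [← his, div_mul_cancel₀ _ (hb i).ne']
        rw [hy, dotProduct_smul, smul_eq_mul, h1]
        field_simp
      have hHy : g i ⬝ᵥ f y ≤ 0 := H i y hyP hyface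
      have hnorm_xy : ‖x s - y‖ ≤ (W s - 1) * M := by
        have h1 : x s - y = (1 - (W s)⁻¹) • x s := by
          rw [hy, sub_smul, one_smul]
        have hinv1 : (W s)⁻¹ ≤ 1 := by
          rw [inv_le_one_iff₀]; right; exact hWs1
        have hinv0 : 0 < (W s)⁻¹ := inv_pos.2 hWpos
        have h3 : 1 - (W s)⁻¹ ≤ W s - 1 := by
          have h4 : (1 - (W s)⁻¹) * W s ≤ (W s - 1) * W s := by
            have : (1 - (W s)⁻¹) * W s = W s - 1 := by field_simp
            nlinarith
          exact le_of_mul_le_mul_right h4 hWpos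
        rw [h1, norm_smul, Real.norm_eq_abs, abs_of_nonneg (by linarith)]
        exact mul_le_mul h3 (hMle s ⟨hs.1, hs.2.le⟩) (norm_nonneg _) (by linarith)
      have hlip : ‖f (x s) - f y‖ ≤ (K:ℝ) * ‖x s - y‖ := by
        have := hK.dist_le_mul (x s) y
        simpa [dist_eq_norm] using this
      have hdot : g i ⬝ᵥ f (x s) - g i ⬝ᵥ f y ≤ (∑ j, |g i j|) * ((K:ℝ) * ((W s - 1) * M)) := by
        rw [← dotProduct_sub]
        calc g i ⬝ᵥ (f (x s) - f y) ≤ |g i ⬝ᵥ (f (x s) - f y)| := le_abs_self _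
        _ ≤ (∑ j, |g i j|) * ‖f (x s) - f y‖ := abs_dot_le _ _
        _ ≤ (∑ j, |g i j|) * ((K:ℝ) * ((W s - 1) * M)) := by
            refine mul_le_mul_of_nonneg_left ?_ (by positivity)
            calc ‖f (x s) - f y‖ ≤ (K:ℝ) * ‖x s - y‖ := hlip
            _ ≤ (K:ℝ) * ((W s - 1) * M) :=
              mul_le_mul_of_nonneg_left hnorm_xy K.coe_nonneg
      have hfinal : g i ⬝ᵥ f (x s) ≤ (∑ j, |g i j|) * (K:ℝ) * M * (W s - 1) := by
        have heq : (∑ j, |g i j|) * ((K:ℝ) * ((W s - 1) * M))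
            = (∑ j, |g i j|) * (K:ℝ) * M * (W s - 1) := by ring
        linarith [hdot, hHy, heq.le, heq.ge]
      rw [div_le_iff₀ (hb i)]
      calc g i ⬝ᵥ f (x s) ≤ (∑ j, |g i j|) * (K:ℝ) * M * (W s - 1) := hfinal
      _ = c i * (W s - 1) * b i := by
          simp only [hc]
          rw [eq_comm, div_mul_eq_mul_div, div_mul_eq_mul_div, div_eq_iff (hb i).ne']
      _ ≤ C₀ * (W s - 1) * b i := by
          refine mul_le_mul_of_nonneg_right ?_ (hb i).le
          exact mul_le_mul_of_nonneg_right (hcC₀ i) (by linarith)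
    have hslope : ∀ s ∈ Ico t₀ t₁, ∀ r, F' s < r →
        ∃ᶠ z in 𝓝[>] s, (z - s)⁻¹ * ((W z - 1) - (W s - 1)) < r := by
      intro s hs r hr
      have hs0 : 0 ≤ s := ht₀0.trans hs.1
      have hevA : ∀ᶠ z in 𝓝[>] s, ∀ i, g i ⬝ᵥ x z / b i < W s + r * (z - s) := by
        rw [eventually_all]
        intro i
        by_cases hi : i ∈ am s
        · have hψ : g i ⬝ᵥ f (x s) / b i < r :=
            lt_of_le_of_lt (Finset.le_sup' (fun i => g i ⬝ᵥ f (x s) / b i) hi) hr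
          have hder := (hphi i s hs0).hasDerivWithinAt (s := Ioi s)
          have htend := (hasDerivWithinAt_iff_tendsto_slope' notMem_Ioi_self).1 hder
          have hev' : ∀ᶠ z in 𝓝[>] s, slope (fun z => g i ⬝ᵥ x z / b i) s z < r :=
            htend.eventually_lt_const hψ
          have hWs : g i ⬝ᵥ x s / b i = W s := (Finset.mem_filter.1 hi).2
          filter_upwards [hev', self_mem_nhdsWithin] with z h1 h2
          rw [slope_def_field] at h1
          have hzs : 0 < z - s := sub_pos.2 h2
          have h3 := (div_lt_iff₀ hzs).1 h1
          linarith [hWs.le, hWs.ge]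
        · have hlt : g i ⬝ᵥ x s / b i < W s :=
            lt_of_le_of_ne (hle_sup s i)
              (fun h => hi (Finset.mem_filter.2 ⟨Finset.mem_univ i, h⟩))
          have hcont_i : ContinuousAt
              (fun z => W s + r * (z - s) - g i ⬝ᵥ x z / b i) s := by
            refine ContinuousAt.sub ?_ (hphi i s hs0).continuousAt
            exact continuousAt_const.add
              (continuousAt_const.mul ((continuousAt_id).sub continuousAt_const))
          have hval : (0:ℝ) < W s + r * (s - s) - g i ⬝ᵥ x s / b i := by
            simp only [sub_self, mul_zero, add_zero]
            linarith
          have hev' : ∀ᶠ z in 𝓝 s, 0 < W s + r * (z - s) - g i ⬝ᵥ x z / b i :=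
            hcont_i.eventually_const_lt hval
          filter_upwards [hev'.filter_mono nhdsWithin_le_nhds] with z hz
          linarith
      have hevB : ∀ᶠ z in 𝓝[>] s, (z - s)⁻¹ * ((W z - 1) - (W s - 1)) < r := by
        filter_upwards [hevA, self_mem_nhdsWithin] with z h1 h2
        have hzs : 0 < z - s := sub_pos.2 h2
        have hWz : W z < W s + r * (z - s) := by
          show (Finset.univ.sup' Finset.univ_nonempty fun i => g i ⬝ᵥ x z / b i)
            < W s + r * (z - s)
          exact (Finset.sup'_lt_iff Finset.univ_nonempty).2 fun i _ => h1 i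
        have h3 : (W z - 1) - (W s - 1) < r * (z - s) := by linarith
        rw [← div_eq_inv_mul, div_lt_iff₀ hzs]
        linarith
      exact hevB.frequently
    have hgron := le_gronwallBound_of_liminf_deriv_right_le hcont hslope hinit hbound
      t₁ ⟨ht₀t₁, le_rfl⟩
    rw [gronwallBound_ε0_δ0] at hgron
    have hWt₁ : W t₁ ≤ 1 := by linarith
    exact hcon ((hmemW _).2 hWt₁)
end

section
/- Let g : ℝⁿ → ℝ be a convex, continuously differentiable function such that there exists x⁰ with g(x⁰) < 0, let S = {x ∈ ℝⁿ : g(x) ≤ 0}, and let f : ℝⁿ → ℝⁿ be Lipschitz continuous. Then S is an invariant set for the continuous system ẋ(t) = f(x(t)) if and only if ∇g(x)ᵀ f(x) ≤ 0 for all x on the boundary of S, i.e., for all x with g(x) = 0. -/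
open Set Metric Filter Real
set_option maxHeartbeats 1000000
set_option linter.unusedSectionVars false

section GlobalSol
variable {E : Type*} [NormedAddCommGroup E] [NormedSpace ℝ E] [CompleteSpace E]

theorem my_seg (f : E → E) (K : NNReal) (hK : LipschitzWith K f) {τ : ℝ} (hτ : 0 < τ)
    (hKτ : (K:ℝ)*τ ≤ 1/2) (a : ℝ) (c : E) :
    ∃ y : ℝ → E, y a = c ∧
      ∀ t ∈ Icc (a-τ) (a+τ), HasDerivWithinAt y (f (y t)) (Icc (a-τ) (a+τ)) t := by
  have hfc : (0:ℝ) ≤ ‖f c‖ := norm_nonneg _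
  have hpl : IsPicardLindelof (fun _ : ℝ => f) (tmin := a-τ) (tmax := a+τ)
      ⟨a, by constructor <;> linarith⟩ c (⟨2*τ*‖f c‖+1, by positivity⟩ : NNReal) 0
      (⟨‖f c‖ + K*(2*τ*‖f c‖+1), by positivity⟩ : NNReal) K := by
    constructor
    · exact fun _ _ => hK.lipschitzOnWith
    · exact fun _ _ => continuousOn_const
    · intro t _ z hz
      have h1 : ‖f z - f c‖ ≤ (K:ℝ) * ‖z - c‖ := by
        simpa [dist_eq_norm] using hK.dist_le_mul z c
      have h2 : ‖z - c‖ ≤ 2*τ*‖f c‖+1 := by rw [← dist_eq_norm]; exact mem_closedBall.mp hz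
      show ‖f z‖ ≤ ‖f c‖ + K*(2*τ*‖f c‖+1)
      have h3 : ‖f z‖ ≤ ‖f c‖ + ‖f z - f c‖ := by
        calc ‖f z‖ = ‖f c + (f z - f c)‖ := by rw [add_sub_cancel]
        _ ≤ ‖f c‖ + ‖f z - f c‖ := norm_add_le _ _
      have hK0 : (0:ℝ) ≤ K := K.2
      nlinarith
    · have : max (a + τ - a) (a - (a - τ)) = τ := by rw [show a + τ - a = τ by ring, show a - (a-τ) = τ by ring, max_self]
      show (‖f c‖ + K*(2*τ*‖f c‖+1)) * max (a + τ - a) (a - (a - τ)) ≤ (2*τ*‖f c‖+1) - ((0:NNReal):ℝ)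
      rw [this, NNReal.coe_zero, sub_zero]
      have hK0 : (0:ℝ) ≤ K := K.2
      nlinarith [mul_nonneg (mul_nonneg hτ.le hfc) (by linarith : (0:ℝ) ≤ 1/2 - (K:ℝ)*τ)]
  obtain ⟨y, hy0, hyD⟩ := hpl.exists_eq_forall_mem_Icc_hasDerivWithinAt₀
  exact ⟨y, hy0, hyD⟩

theorem my_exists_global_sol (f : E → E) (K : NNReal) (hK : LipschitzWith K f) (x₀ : E) :
    ∃ X : ℝ → E, X 0 = x₀ ∧ ∀ t, 0 ≤ t → HasDerivAt X (f (X t)) t := by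
  set τ : ℝ := (2*((K:ℝ)+1))⁻¹ with hτdef
  have hτ : 0 < τ := by positivity
  have hKτ : (K:ℝ)*τ ≤ 1/2 := by
    rw [hτdef, mul_inv_le_iff₀ (by positivity)]
    have : (0:ℝ) ≤ K := K.2
    linarith
  choose sol hsol0 hsolD using my_seg f K hK hτ hKτ
  set F : ℕ → (ℝ → E) := fun k => Nat.rec (sol 0 x₀)
    (fun k Fk => sol (((k:ℝ)+1)*τ) (Fk (((k:ℝ)+1)*τ))) k with hFdef
  have hF0 : F 0 = sol 0 x₀ := rfl
  have hFs : ∀ k : ℕ, F (k+1) = sol (((k:ℝ)+1)*τ) (F k (((k:ℝ)+1)*τ)) := fun k => rfl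
  have hFinit : ∀ k : ℕ, F (k+1) (((k:ℝ)+1)*τ) = F k (((k:ℝ)+1)*τ) := by
    intro k; rw [hFs k, hsol0]
  have hF00 : F 0 0 = x₀ := by rw [hF0, hsol0]
  have hFD : ∀ k : ℕ, ∀ t ∈ Icc ((k:ℝ)*τ - τ) ((k:ℝ)*τ + τ),
      HasDerivWithinAt (F k) (f (F k t)) (Icc ((k:ℝ)*τ - τ) ((k:ℝ)*τ + τ)) t := by
    intro k
    cases k with
    | zero => rw [hF0]; simpa using hsolD 0 x₀
    | succ m =>
      have : ((m+1:ℕ):ℝ) = (m:ℝ)+1 := by push_cast; ring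
      rw [hFs m]
      simpa [this] using hsolD (((m:ℝ)+1)*τ) (F m (((m:ℝ)+1)*τ))
  set X : ℝ → E := fun t => if t < 0 then F 0 t else F ⌊t/τ⌋₊ t with hXdef
  have hfloor : ∀ (k : ℕ) (z : ℝ), (k:ℝ)*τ ≤ z → z < ((k:ℝ)+1)*τ → ⌊z/τ⌋₊ = k := by
    intro k z h1 h2
    have hz0 : 0 ≤ z := le_trans (by positivity) h1
    rw [Nat.floor_eq_iff (by positivity)]
    constructor
    · rw [le_div_iff₀ hτ]; exact h1
    · rw [div_lt_iff₀ hτ]; exact h2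
  have hXeq : ∀ (k : ℕ) (z : ℝ), (k:ℝ)*τ ≤ z → z < ((k:ℝ)+1)*τ → X z = F k z := by
    intro k z h1 h2
    have hz0 : 0 ≤ z := le_trans (by positivity) h1
    rw [hXdef]
    simp only [not_lt.mpr hz0, if_false, hfloor k z h1 h2]
  have hX0 : X 0 = x₀ := by
    rw [hXeq 0 0 (by simp) (by simpa using hτ), hF00]
  refine ⟨X, hX0, ?_⟩
  intro t ht
  set k : ℕ := ⌊t/τ⌋₊ with hkdef
  have hk1 : (k:ℝ)*τ ≤ t := by
    rw [← le_div_iff₀ hτ]; exact Nat.floor_le (by positivity)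
  have hk2 : t < ((k:ℝ)+1)*τ := by
    rw [← div_lt_iff₀ hτ]; exact Nat.lt_floor_add_one _
  have hXt : X t = F k t := hXeq k t hk1 hk2
  clear_value k
  rcases eq_or_lt_of_le hk1 with heq | hlt
  · -- t = k*τ, junction
    cases k with
    | zero =>
      have ht0 : t = 0 := by simpa using heq.symm
      subst ht0
      have hd : HasDerivAt (F 0) (f (F 0 0)) 0 := by
        have := hFD 0 0 (by constructor <;> simp <;> linarith)
        refine this.hasDerivAt (Icc_mem_nhds ?_ ?_) <;> simp <;> linarith
      have hev : X =ᶠ[nhds 0] F 0 := by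
        filter_upwards [Ioo_mem_nhds (by linarith : -τ < (0:ℝ)) hτ] with z hz
        rcases lt_or_ge z 0 with h | h
        · rw [hXdef]; simp [h]
        · exact hXeq 0 z (by simpa using h) (by simpa using hz.2)
      rw [hXt]
      exact hd.congr_of_eventuallyEq hev
    | succ m =>
      have htval : t = ((m:ℝ)+1)*τ := by push_cast at heq ⊢; linarith [heq]
      -- right piece: F (m+1)
      have hdR : HasDerivAt (F (m+1)) (f (F (m+1) t)) t := by
        have hmem : t ∈ Icc (((m+1:ℕ):ℝ)*τ - τ) (((m+1:ℕ):ℝ)*τ + τ) := by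
          push_cast; constructor <;> (rw [htval]; push_cast) <;> linarith
        refine (hFD (m+1) t hmem).hasDerivAt (Icc_mem_nhds ?_ ?_) <;>
          (push_cast; rw [htval]; push_cast) <;> linarith
      have hR : HasDerivWithinAt X (f (X t)) (Ici t) t := by
        have hev : X =ᶠ[nhdsWithin t (Ici t)] F (m+1) := by
          refine Filter.eventuallyEq_of_mem (Ico_mem_nhdsGE hk2) (fun z hz => ?_)
          exact hXeq (m+1) z (heq ▸ hz.1) hz.2
        rw [hXt]
        exact hdR.hasDerivWithinAt.congr_of_eventuallyEq hev hXt
      have hL : HasDerivWithinAt X (f (X t)) (Iic t) t := by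
        have hmem : t ∈ Icc ((m:ℝ)*τ - τ) ((m:ℝ)*τ + τ) := by
          rw [htval]; constructor <;> nlinarith
        have hval : F m t = X t := by
          rw [hXt, htval]
          exact (hFinit m).symm
        have hD := (hFD m t hmem).mono_of_mem_nhdsWithin
          (Icc_mem_nhdsLE_of_mem ⟨by rw [htval]; nlinarith, hmem.2⟩)
        have hev : X =ᶠ[nhdsWithin t (Iic t)] F m := by
          refine Filter.eventuallyEq_of_mem
            (Icc_mem_nhdsLE_of_mem ⟨?_, le_rfl⟩ : Icc ((m:ℝ)*τ) t ∈ _) (fun z hz => ?_)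
          · rw [htval]; nlinarith
          · rcases eq_or_lt_of_le hz.2 with hzt | hzt
            · rw [hzt, hval]
            · refine hXeq m z hz.1 ?_
              rw [htval] at hzt; push_cast; linarith
        have hDX := hD.congr_of_eventuallyEq hev hval.symm
        rwa [hval] at hDX
      have hLR := hL.union hR
      rwa [Iic_union_Ici, hasDerivWithinAt_univ] at hLR
  · -- k*τ < t : interior
    have hd : HasDerivAt (F k) (f (F k t)) t := by
      have hmem : t ∈ Icc ((k:ℝ)*τ - τ) ((k:ℝ)*τ + τ) := by
        constructor
        · linarith
        · push_cast at hk2; linarith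
      refine (hFD k t hmem).hasDerivAt (Icc_mem_nhds ?_ ?_)
      · linarith
      · push_cast at hk2; linarith
    have hev : X =ᶠ[nhds t] F k := by
      filter_upwards [Ioo_mem_nhds hlt hk2] with z hz
      exact hXeq k z hz.1.le hz.2
    rw [hXt]
    exact hd.congr_of_eventuallyEq hev

end GlobalSol

section Hilbert
variable {H : Type*} [NormedAddCommGroup H] [InnerProductSpace ℝ H] [CompleteSpace H]

local notation "⟪" x ", " y "⟫" => @inner ℝ _ _ x y

theorem my_grad_ineq (g : H → ℝ) (hgconv : ConvexOn ℝ Set.univ g)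
    (hgd : Differentiable ℝ g) (a b : H) :
    fderiv ℝ g a (b - a) ≤ g b - g a := by
  set φ : ℝ → ℝ := fun s => g (AffineMap.lineMap a b s) with hφdef
  have hline : HasDerivAt (fun s : ℝ => AffineMap.lineMap a b s) (b - a) 0 := by
    have h : HasDerivAt (fun s : ℝ => s • (b - a) + a) (b - a) 0 := by
      simpa using (((hasDerivAt_id (0:ℝ)).smul_const (b - a)).add_const a)
    refine h.congr_of_eventuallyEq (Filter.Eventually.of_forall fun s => ?_)
    simp [AffineMap.lineMap_apply_module']
  have hφ : HasDerivAt φ (fderiv ℝ g a (b - a)) 0 := by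
    have h0 : (AffineMap.lineMap a b : ℝ →ᵃ[ℝ] H) 0 = a := AffineMap.lineMap_apply_zero a b
    have := (hgd (AffineMap.lineMap a b (0:ℝ))).hasFDerivAt.comp_hasDerivAt 0 hline
    rwa [h0] at this
  have hconv : ConvexOn ℝ Set.univ φ := by
    have := hgconv.comp_affineMap (AffineMap.lineMap a b)
    exact this
  have hs := hconv.le_slope_of_hasDerivAt (mem_univ (0:ℝ)) (mem_univ (1:ℝ)) zero_lt_one hφ
  have : slope φ 0 1 = g b - g a := by
    rw [slope_def_field]
    simp [hφdef]
  linarith [hs, this.le, this.ge]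

theorem my_inv_aux (g : H → ℝ) (hgconv : ConvexOn ℝ Set.univ g) (hgC1 : ContDiff ℝ 1 g)
    {x0 : H} (hx0 : g x0 < 0) (f : H → H) (K : NNReal) (hK : LipschitzWith K f)
    (hb : ∀ y, g y = 0 → fderiv ℝ g y (f y) ≤ 0)
    (x : ℝ → H) (hx : ∀ t, 0 ≤ t → HasDerivAt x (f (x t)) t) (h0 : g (x 0) ≤ 0) :
    ∀ t, 0 ≤ t → g (x t) ≤ 0 := by
  have hgd : Differentiable ℝ g := hgC1.differentiable one_ne_zero
  set S : Set H := {y | g y ≤ 0} with hSdef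
  have hSconv : Convex ℝ S := by
    have := hgconv.convex_le 0
    simpa [hSdef] using this
  have hSclosed : IsClosed S := isClosed_le hgC1.continuous continuous_const
  have hSne : S.Nonempty := ⟨x0, hx0.le⟩
  -- projection onto S
  have hproj : ∀ q : H, ∃ p ∈ S, ‖q - p‖ = infDist q S ∧ ∀ z ∈ S, ⟪q - p, z - p⟫ ≤ 0 := by
    intro q
    obtain ⟨p, hpS, hpmin⟩ :=
      exists_norm_eq_iInf_of_complete_convex hSne hSclosed.isComplete hSconv q
    refine ⟨p, hpS, ?_, (norm_eq_iInf_iff_real_inner_le_zero hSconv hpS).mp hpmin⟩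
    rw [hpmin, Metric.infDist_eq_iInf]
    congr 1; funext w; rw [dist_eq_norm]
  -- key: the normal direction pairs nonpositively with f p
  have hkey : ∀ (q p : H), p ∈ S → (∀ z ∈ S, ⟪q - p, z - p⟫ ≤ 0) → ⟪q - p, f p⟫ ≤ 0 := by
    intro q p hpS hchar
    by_cases hu : q - p = 0
    · simp [hu]
    have hgple : g p ≤ 0 := hpS
    rcases lt_or_eq_of_le hgple with hplt | hpeq
    · -- p in the interior: normal must vanish, contradiction with hu
      exfalso
      have hopen : IsOpen {y : H | g y < 0} := isOpen_lt hgC1.continuous continuous_const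
      obtain ⟨ε, hε, hball⟩ := Metric.isOpen_iff.mp hopen p hplt
      set z : H := p + (ε / (2 * ‖q - p‖)) • (q - p) with hzdef
      have hnorm : ‖q - p‖ > 0 := norm_pos_iff.mpr hu
      have hz : z ∈ S := by
        show g z ≤ 0
        apply le_of_lt
        apply hball
        rw [Metric.mem_ball, hzdef, dist_eq_norm]
        have : p + (ε / (2 * ‖q - p‖)) • (q - p) - p = (ε / (2 * ‖q - p‖)) • (q - p) := by abel
        rw [this, norm_smul, Real.norm_eq_abs, abs_of_pos (by positivity)]
        have heq3 : ε / (2 * ‖q - p‖) * ‖q - p‖ = ε / 2 := by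
          field_simp
        rw [heq3]; linarith
      have := hchar z hz
      rw [hzdef] at this
      have heq : p + (ε / (2 * ‖q - p‖)) • (q - p) - p = (ε / (2 * ‖q - p‖)) • (q - p) := by abel
      rw [heq, real_inner_smul_right] at this
      have hip : ⟪q - p, q - p⟫ > 0 := by
        rw [real_inner_self_eq_norm_sq]; nlinarith [hnorm]
      nlinarith [this, hip, (by positivity : (0:ℝ) < ε / (2 * ‖q - p‖))]
    · -- g p = 0 : use the boundary condition plus Slater point
      have hgp : g p = 0 := hpeq
      have hfp : fderiv ℝ g p (f p) ≤ 0 := hb p hgp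
      have hx0p : fderiv ℝ g p (x0 - p) ≤ g x0 := by
        have := my_grad_ineq g hgconv hgd p x0
        rw [hgp] at this; linarith
      refine le_of_forall_pos_le_add ?_
      intro ε hε
      set C : ℝ := ‖q - p‖ * ‖x0 - p‖ + 1 with hCdef
      have hC : 0 < C := by positivity
      set δ : ℝ := ε / C with hδdef
      have hδ : 0 < δ := by positivity
      set d : H := f p + δ • (x0 - p) with hddef
      have hcderiv : fderiv ℝ g p d < 0 := by
        rw [hddef, map_add, map_smul]
        have : δ * fderiv ℝ g p (x0 - p) ≤ δ * g x0 := by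
          apply mul_le_mul_of_nonneg_left hx0p hδ.le
        have hneg : δ * g x0 < 0 := mul_neg_of_pos_of_neg hδ hx0
        simp only [smul_eq_mul]
        linarith
      -- find s > 0 with g (p + s • d) < 0
      have hline : HasDerivAt (fun s : ℝ => g (p + s • d)) (fderiv ℝ g p d) 0 := by
        have h1 : HasDerivAt (fun s : ℝ => p + s • d) d 0 := by
          simpa using (((hasDerivAt_id (0:ℝ)).smul_const d).const_add p)
        have := (hgd (p + (0:ℝ) • d)).hasFDerivAt.comp_hasDerivAt 0 h1
        simp only [zero_smul, add_zero] at this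
        exact this
      have hslope := hasDerivAt_iff_tendsto_slope.mp hline
      have hslope' : Tendsto (slope (fun s : ℝ => g (p + s • d)) 0) (nhdsWithin 0 (Ioi 0))
          (nhds (fderiv ℝ g p d)) :=
        hslope.mono_left (nhdsWithin_mono 0 (fun z hz => ne_of_gt hz))
      have hev : ∀ᶠ s in nhdsWithin 0 (Ioi (0:ℝ)), slope (fun s : ℝ => g (p + s • d)) 0 s < 0 :=
        hslope' (Iio_mem_nhds hcderiv)
      obtain ⟨s, hs_slope, hs_pos⟩ := (hev.and self_mem_nhdsWithin).exists
      have hs_pos0 : (0:ℝ) < s := hs_pos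
      have hgz : g (p + s • d) < 0 := by
        have hf0 : g (p + (0:ℝ) • d) = 0 := by rw [zero_smul, add_zero, hgp]
        rw [slope_def_field, hf0, sub_zero, sub_zero] at hs_slope
        rcases div_neg_iff.mp hs_slope with ⟨_, hsneg⟩ | ⟨hnum, _⟩
        · linarith
        · exact hnum
      have hzS : p + s • d ∈ S := le_of_lt hgz
      have := hchar _ hzS
      have heq2 : p + s • d - p = s • d := by abel
      rw [heq2, real_inner_smul_right] at this
      have hs_pos' : (0:ℝ) < s := hs_pos0
      have hinner_d : ⟪q - p, d⟫ ≤ 0 := by nlinarith [this, hs_pos']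
      have hfq : ⟪q - p, f p⟫ ≤ - (δ * ⟪q - p, x0 - p⟫) := by
        rw [hddef] at hinner_d
        rw [inner_add_right, real_inner_smul_right] at hinner_d
        linarith
      have habs : ⟪q - p, x0 - p⟫ ≥ -(‖q - p‖ * ‖x0 - p‖) := by
        have h1 := abs_real_inner_le_norm (q - p) (x0 - p)
        have h2 := abs_le.mp h1
        linarith [h2.1]
      calc ⟪q - p, f p⟫ ≤ - (δ * ⟪q - p, x0 - p⟫) := hfq
        _ ≤ δ * (‖q - p‖ * ‖x0 - p‖) := by nlinarith
        _ ≤ δ * C := by rw [hCdef]; nlinarith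
        _ = ε := by rw [hδdef]; field_simp
        _ ≤ 0 + ε := by linarith
  intro T hT
  set D : ℝ → ℝ := fun t => (infDist (x t) S)^2 with hDdef
  have hxcont : ContinuousOn x (Icc 0 T) := fun t ht =>
    ((hx t ht.1).continuousAt).continuousWithinAt
  have hDcont : ContinuousOn D (Icc 0 T) :=
    ((continuous_infDist_pt S).comp_continuousOn hxcont).pow 2
  have hmain : ∀ t ∈ Icc (0:ℝ) T, D t ≤ gronwallBound 0 (2*(K:ℝ)) 0 (t - 0) := by
    apply le_gronwallBound_of_liminf_deriv_right_le hDcont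
      (f' := fun t => 2*(K:ℝ)*D t) ?slope ?init ?bound
    case init =>
      have hmem : x 0 ∈ S := h0
      have : infDist (x 0) S = 0 := infDist_zero_of_mem hmem
      simp [hDdef, this]
    case bound => intro t _; simp
    case slope =>
      intro t ht r hr
      obtain ⟨p, hpS, hpnorm, hpchar⟩ := hproj (x t)
      have hDt : D t = ‖x t - p‖^2 := by simp only [hDdef]; rw [← hpnorm]
      have hφd : HasDerivAt (fun z => ⟪x z - p, x z - p⟫) (2 * ⟪x t - p, f (x t)⟫) t := by
        have hxd : HasDerivAt (fun z => x z - p) (f (x t)) t := (hx t ht.1).sub_const p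
        have h := HasDerivAt.inner (𝕜 := ℝ) hxd hxd
        rw [real_inner_comm (x t - p) (f (x t)), ← two_mul] at h
        exact h
      have hval : 2 * ⟪x t - p, f (x t)⟫ < r := by
        have h1 : ⟪x t - p, f (x t) - f p⟫ ≤ ‖x t - p‖ * ‖f (x t) - f p‖ :=
          real_inner_le_norm _ _
        have h2 : ‖f (x t) - f p‖ ≤ (K:ℝ) * ‖x t - p‖ := by
          simpa [dist_eq_norm] using hK.dist_le_mul (x t) p
        have h3 : ⟪x t - p, f p⟫ ≤ 0 := hkey (x t) p hpS hpchar
        have h4 : ⟪x t - p, f (x t)⟫ = ⟪x t - p, f (x t) - f p⟫ + ⟪x t - p, f p⟫ := by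
          rw [← inner_add_right]; congr 1; abel
        have hrr : 2*(K:ℝ)*D t < r := hr
        rw [hDt] at hrr
        nlinarith [norm_nonneg (x t - p)]
      have hev : ∀ᶠ z in nhdsWithin t (Ioi t),
          slope (fun z => ⟪x z - p, x z - p⟫) t z < r := by
        have htd := (hasDerivAt_iff_tendsto_slope.mp hφd).mono_left
          (nhdsWithin_mono t (fun z hz => ne_of_gt hz))
        exact htd (Iio_mem_nhds hval)
      refine ((hev.and self_mem_nhdsWithin).mono ?_).frequently
      rintro z ⟨hz1, hz2⟩
      have hzt : t < z := hz2
      have hpos : (0:ℝ) < z - t := by linarith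
      have hDz : D z ≤ ⟪x z - p, x z - p⟫ := by
        simp only [hDdef]
        rw [real_inner_self_eq_norm_sq]
        have hle : infDist (x z) S ≤ ‖x z - p‖ := by
          rw [← dist_eq_norm]; exact infDist_le_dist_of_mem hpS
        exact pow_le_pow_left₀ infDist_nonneg hle 2
      have hDt' : D t = ⟪x t - p, x t - p⟫ := by rw [hDt, real_inner_self_eq_norm_sq]
      rw [slope_def_field, div_lt_iff₀ hpos] at hz1
      have hstep : (z - t)⁻¹ * (D z - D t) ≤
          (z - t)⁻¹ * (⟪x z - p, x z - p⟫ - ⟪x t - p, x t - p⟫) := by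
        apply mul_le_mul_of_nonneg_left _ (inv_nonneg.mpr hpos.le)
        rw [hDt']; linarith
      refine lt_of_le_of_lt hstep ?_
      rw [inv_mul_lt_iff₀ hpos] at *
      linarith [hz1]
  have hfinal := hmain T ⟨hT, le_rfl⟩
  rw [sub_zero, gronwallBound_ε0_δ0] at hfinal
  have hD0 : D T = 0 := le_antisymm hfinal (by simp only [hDdef]; positivity)
  have hinf : infDist (x T) S = 0 := by
    simp only [hDdef] at hD0
    exact pow_eq_zero_iff (by norm_num) |>.mp hD0
  have : x T ∈ S := (hSclosed.mem_iff_infDist_zero hSne).mpr hinf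
  exact this

end Hilbert


/-- Invariance condition for a convex sublevel set `S = {x | g(x) ≤ 0}` (with a Slater
point, `g` convex and continuously differentiable) under a continuous system `ẋ = f(x)`
with `f` Lipschitz: `S` is invariant iff `∇g(x)ᵀ f(x) ≤ 0` on the boundary `{x | g(x) = 0}`. -/
theorem stmt_12 {n : ℕ} (g : (Fin n → ℝ) → ℝ) (hgconv : ConvexOn ℝ Set.univ g)
    (hgC1 : ContDiff ℝ 1 g)
    (hslater : ∃ x0 : Fin n → ℝ, g x0 < 0)
    (S : Set (Fin n → ℝ)) (hS : S = {x | g x ≤ 0})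
    (f : (Fin n → ℝ) → (Fin n → ℝ)) (hf : ∃ K : NNReal, LipschitzWith K f) :
    (∀ x : ℝ → (Fin n → ℝ),
        (∀ t : ℝ, 0 ≤ t → HasDerivAt x (f (x t)) t) →
        x 0 ∈ S → ∀ t : ℝ, 0 ≤ t → x t ∈ S) ↔
      (∀ x : Fin n → ℝ, g x = 0 → fderiv ℝ g x (f x) ≤ 0) := by
  obtain ⟨K, hK⟩ := hf
  obtain ⟨x0, hsl0⟩ := hslater
  have hgd : Differentiable ℝ g := hgC1.differentiable one_ne_zero
  constructor
  · intro hinv y hy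
    obtain ⟨X, hX0, hXD⟩ := my_exists_global_sol f K hK y
    have hmem : ∀ t, 0 ≤ t → X t ∈ S := hinv X hXD (by rw [hS]; show g (X 0) ≤ 0; rw [hX0, hy])
    have hd : HasDerivAt (fun t => g (X t)) (fderiv ℝ g y (f y)) 0 := by
      have h := (hgd (X 0)).hasFDerivAt.comp_hasDerivAt 0 (hXD 0 le_rfl)
      rwa [hX0] at h
    have hmono : nhdsWithin (0:ℝ) (Set.Ioi 0) ≤ nhdsWithin 0 {(0:ℝ)}ᶜ :=
      nhdsWithin_mono 0 (fun z hz => ne_of_gt hz)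
    have htd := (hasDerivAt_iff_tendsto_slope.mp hd).mono_left hmono
    refine le_of_tendsto htd ?_
    filter_upwards [self_mem_nhdsWithin] with z hz
    have hz0 : (0:ℝ) < z := hz
    have hgz : g (X z) ≤ 0 := by have h := hmem z hz0.le; rwa [hS] at h
    have hg0 : g (X 0) = 0 := by rw [hX0, hy]
    rw [slope_def_field, hg0, sub_zero, sub_zero]
    exact div_nonpos_iff.mpr (Or.inr ⟨hgz, hz0.le⟩)
  · intro hb x hx hx0 t ht
    set e : (Fin n → ℝ) ≃L[ℝ] EuclideanSpace ℝ (Fin n) :=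
      (EuclideanSpace.equiv (Fin n) ℝ).symm with hedef
    set G : EuclideanSpace ℝ (Fin n) → ℝ := fun y => g (e.symm y) with hGdef
    set F : EuclideanSpace ℝ (Fin n) → EuclideanSpace ℝ (Fin n) :=
      fun y => e (f (e.symm y)) with hFdef
    have hGconv : ConvexOn ℝ Set.univ G := by
      refine ⟨convex_univ, ?_⟩
      intro y _ z _ a b ha hb' hab
      simp only [hGdef, map_add, map_smul]
      exact hgconv.2 (Set.mem_univ _) (Set.mem_univ _) ha hb' hab
    have hGC1 : ContDiff ℝ 1 G :=
      hgC1.comp (e.symm : EuclideanSpace ℝ (Fin n) →L[ℝ] (Fin n → ℝ)).contDiff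
    have hGslater : G (e x0) < 0 := by
      simp only [hGdef, ContinuousLinearEquiv.symm_apply_apply]
      exact hsl0
    have hFlip : LipschitzWith (‖(e : (Fin n → ℝ) →L[ℝ] EuclideanSpace ℝ (Fin n))‖₊ *
        (K * ‖(e.symm : EuclideanSpace ℝ (Fin n) →L[ℝ] (Fin n → ℝ))‖₊)) F :=
      e.lipschitz.comp (hK.comp e.symm.lipschitz)
    have hGb : ∀ y, G y = 0 → fderiv ℝ G y (F y) ≤ 0 := by
      intro y hy
      have h1 : HasFDerivAt G ((fderiv ℝ g (e.symm y)).comp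
          (e.symm : EuclideanSpace ℝ (Fin n) →L[ℝ] (Fin n → ℝ))) y :=
        (hgd (e.symm y)).hasFDerivAt.comp y e.symm.hasFDerivAt
      rw [h1.fderiv]
      simp only [ContinuousLinearMap.comp_apply, ContinuousLinearEquiv.coe_coe, hFdef,
        ContinuousLinearEquiv.symm_apply_apply]
      exact hb (e.symm y) hy
    set Y : ℝ → EuclideanSpace ℝ (Fin n) := fun s => e (x s) with hYdef
    have hYD : ∀ s, 0 ≤ s → HasDerivAt Y (F (Y s)) s := by
      intro s hs
      have h := (e : (Fin n → ℝ) →L[ℝ] EuclideanSpace ℝ (Fin n)).hasFDerivAt.comp_hasDerivAt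
        s (hx s hs)
      have heq : F (Y s) = e (f (x s)) := by
        simp [hFdef, hYdef]
      rw [heq]
      exact h
    have hY0 : G (Y 0) ≤ 0 := by
      have h := hx0
      rw [hS] at h
      simpa [hGdef, hYdef] using h
    have hfin := my_inv_aux G hGconv hGC1 hGslater F _ hFlip hGb Y hYD hY0 t ht
    rw [hS]
    simpa [hGdef, hYdef] using hfin
end

section
/- Let g : ℝⁿ → ℝ be a convex, continuously differentiable function such that there exists x⁰ with g(x⁰) < 0, let S = {x ∈ ℝⁿ : g(x) ≤ 0}, and let x ∈ ℝⁿ satisfy g(x) = 0 (so x ∈ ∂S). Then the tangent cone of S at x is T_S(x) = {y ∈ ℝⁿ : ∇g(x)ᵀ y ≤ 0}. -/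
open Filter Metric Set

/-- The Bouligand tangent cone `T_S(x) = {y | liminf_{t→0⁺} dist(x + t y, S)/t = 0}`. -/
def bouligandTangentCone {n : ℕ} (S : Set (Fin n → ℝ)) (x : Fin n → ℝ) :
    Set (Fin n → ℝ) :=
  {y | Filter.liminf (fun t : ℝ => Metric.infDist (x + t • y) S / t)
      (nhdsWithin 0 (Set.Ioi 0)) = 0}

/-- Directional derivative as a limit of difference quotients from the right. -/
lemma dir_tendsto_aux {n : ℕ} {g : (Fin n → ℝ) → ℝ} (hgdiff : Differentiable ℝ g)
    (x w : Fin n → ℝ) :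
    Filter.Tendsto (fun t : ℝ => (g (x + t • w) - g x) / t) (nhdsWithin 0 (Set.Ioi 0))
      (nhds (fderiv ℝ g x w)) := by
  have h1 : HasDerivAt (fun t : ℝ => x + t • w) w 0 := by
    simpa using ((hasDerivAt_id (0 : ℝ)).smul_const w).const_add x
  have h2 : HasFDerivAt g (fderiv ℝ g x) ((fun t : ℝ => x + t • w) 0) := by
    simpa using (hgdiff (x + (0 : ℝ) • w)).hasFDerivAt
  have hd : HasDerivAt (fun t : ℝ => g (x + t • w)) (fderiv ℝ g x w) 0 :=
    h2.comp_hasDerivAt 0 h1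
  have hs := hasDerivAt_iff_tendsto_slope.mp hd
  have hmono : nhdsWithin (0 : ℝ) (Set.Ioi 0) ≤ nhdsWithin (0 : ℝ) {(0 : ℝ)}ᶜ :=
    nhdsWithin_mono 0 (fun t ht => ne_of_gt ht)
  have := hs.mono_left hmono
  refine this.congr' ?_
  filter_upwards [self_mem_nhdsWithin] with t ht
  rw [slope_def_field]
  simp

/-- Gradient inequality for convex differentiable functions. -/
lemma grad_ineq_aux {n : ℕ} {g : (Fin n → ℝ) → ℝ} (hgconv : ConvexOn ℝ Set.univ g)
    (hgdiff : Differentiable ℝ g) (p z : Fin n → ℝ) :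
    fderiv ℝ g p (z - p) ≤ g z - g p := by
  have htend := dir_tendsto_aux hgdiff p (z - p)
  refine le_of_tendsto htend ?_
  filter_upwards [Ioc_mem_nhdsGT (zero_lt_one (α := ℝ))] with t ht
  have hkey : g (p + t • (z - p)) ≤ (1 - t) * g p + t * g z := by
    have hc := hgconv.2 (Set.mem_univ p) (Set.mem_univ z) (by linarith [ht.2] : (0:ℝ) ≤ 1 - t)
      (le_of_lt ht.1) (by ring)
    have heq : (1 - t) • p + t • z = p + t • (z - p) := by
      ext i; simp [smul_sub]; ring
    rw [heq] at hc
    simpa using hc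
  rw [div_le_iff₀ ht.1]
  nlinarith [hkey]

/-- The tangent cone of a convex sublevel set `S = {x | g(x) ≤ 0}` (with `g` convex,
continuously differentiable, and a Slater point) at a boundary point `x` (`g(x) = 0`)
is `{y | ∇g(x)ᵀ y ≤ 0}`. -/
theorem stmt_18 {n : ℕ} (g : (Fin n → ℝ) → ℝ) (hgconv : ConvexOn ℝ Set.univ g)
    (hgC1 : ContDiff ℝ 1 g)
    (hslater : ∃ x0 : Fin n → ℝ, g x0 < 0)
    (S : Set (Fin n → ℝ)) (hS : S = {x | g x ≤ 0})
    (x : Fin n → ℝ) (hx : g x = 0) :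
    bouligandTangentCone S x = {y | fderiv ℝ g x y ≤ 0} := by
  obtain ⟨x0, hx0⟩ := hslater
  have hgdiff : Differentiable ℝ g := hgC1.differentiable one_ne_zero
  have hxS : x ∈ S := by rw [hS]; exact le_of_eq hx
  have hx0S : x0 ∈ S := by rw [hS]; exact le_of_lt hx0
  have hSne : S.Nonempty := ⟨x, hxS⟩
  -- the function is eventually bounded above by ‖y‖ and nonneg
  have hub : ∀ y : Fin n → ℝ, ∀ᶠ t : ℝ in nhdsWithin 0 (Set.Ioi 0),
      Metric.infDist (x + t • y) S / t ≤ ‖y‖ := by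
    intro y
    filter_upwards [self_mem_nhdsWithin] with t ht
    have h1 : Metric.infDist (x + t • y) S ≤ dist (x + t • y) x :=
      Metric.infDist_le_dist_of_mem hxS
    have h2 : dist (x + t • y) x = t * ‖y‖ := by
      rw [dist_eq_norm]
      simp [norm_smul, abs_of_pos (Set.mem_Ioi.mp ht)]
    rw [div_le_iff₀ (Set.mem_Ioi.mp ht)]
    calc Metric.infDist (x + t • y) S ≤ t * ‖y‖ := h2 ▸ h1
      _ = ‖y‖ * t := by ring
  have hnonneg : ∀ y : Fin n → ℝ, ∀ᶠ t : ℝ in nhdsWithin 0 (Set.Ioi 0),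
      0 ≤ Metric.infDist (x + t • y) S / t := by
    intro y
    filter_upwards [self_mem_nhdsWithin] with t ht
    exact div_nonneg Metric.infDist_nonneg (le_of_lt (Set.mem_Ioi.mp ht))
  ext y
  simp only [bouligandTangentCone, Set.mem_setOf_eq]
  constructor
  · -- tangent cone ⊆ halfspace
    intro hy
    by_contra hc
    push_neg at hc
    set c : ℝ := fderiv ℝ g x y with hcdef
    -- continuity of the derivative gives a local bound
    set M : ℝ := ‖fderiv ℝ g x‖ + 1 with hMdef
    have hM0 : 0 < M := by positivity
    have hcont : ContinuousAt (fun z => ‖fderiv ℝ g z‖) x :=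
      ((hgC1.continuous_fderiv one_ne_zero).norm).continuousAt
    have hMlt : ‖fderiv ℝ g x‖ < M := by simp [hMdef]
    have hev : ∀ᶠ z in nhds x, ‖fderiv ℝ g z‖ < M :=
      hcont.eventually_lt continuousAt_const hMlt
    obtain ⟨δ, hδ0, hδ⟩ := Metric.eventually_nhds_iff.mp hev
    -- eventually g(x + ty)/t > c/2
    have htend := dir_tendsto_aux hgdiff x y
    have htend' : Filter.Tendsto (fun t : ℝ => g (x + t • y) / t) (nhdsWithin 0 (Set.Ioi 0))
        (nhds c) := by
      refine htend.congr ?_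
      intro t; rw [hx, sub_zero]
    have hev2 : ∀ᶠ t : ℝ in nhdsWithin 0 (Set.Ioi 0), c / 2 < g (x + t • y) / t :=
      htend'.eventually (eventually_gt_nhds (by linarith))
    have hev3 : ∀ᶠ t : ℝ in nhdsWithin 0 (Set.Ioi 0), t * (‖y‖ + 1) < δ := by
      have : Set.Ioo (0 : ℝ) (δ / (‖y‖ + 1)) ∈ nhdsWithin (0 : ℝ) (Set.Ioi 0) :=
        Ioo_mem_nhdsGT (by positivity)
      filter_upwards [this] with t ht
      have := ht.2
      rw [lt_div_iff₀ (by positivity)] at this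
      exact this
    -- lower bound on the ratio
    have hlow : ∀ᶠ t : ℝ in nhdsWithin 0 (Set.Ioi 0),
        c / (2 * M) ≤ Metric.infDist (x + t • y) S / t := by
      filter_upwards [self_mem_nhdsWithin, hev2, hev3] with t ht hgt hδt
      have ht0 : 0 < t := Set.mem_Ioi.mp ht
      set p := x + t • y with hpdef
      have hgp : t * (c / 2) < g p := by
        have := hgt
        rw [lt_div_iff₀ ht0] at this
        linarith
      have hpx : ‖p - x‖ < δ := by
        have h1 : ‖p - x‖ = t * ‖y‖ := by
          simp [hpdef, norm_smul, abs_of_pos ht0]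
        rw [h1]
        nlinarith [norm_nonneg y]
      have hMp : ‖fderiv ℝ g p‖ < M := hδ (by rwa [dist_eq_norm])
      -- every point of S is far from p
      have hfar : ∀ s ∈ S, t * c / (2 * M) ≤ dist p s := by
        intro s hs
        have hgs : g s ≤ 0 := by rw [hS] at hs; exact hs
        have h1 : fderiv ℝ g p (s - p) ≤ g s - g p := grad_ineq_aux hgconv hgdiff p s
        have h2 : -(‖fderiv ℝ g p‖ * ‖s - p‖) ≤ fderiv ℝ g p (s - p) := by
          have habs : |fderiv ℝ g p (s - p)| ≤ ‖fderiv ℝ g p‖ * ‖s - p‖ := by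
            simpa [Real.norm_eq_abs] using (fderiv ℝ g p).le_opNorm (s - p)
          linarith [abs_le.mp habs]
        have h3 : g p ≤ ‖fderiv ℝ g p‖ * ‖s - p‖ := by linarith
        have h4 : t * (c / 2) < M * ‖s - p‖ := by
          have hn : (0:ℝ) ≤ ‖s - p‖ := norm_nonneg _
          nlinarith
        have h5 : t * c / (2 * M) ≤ ‖s - p‖ := by
          rw [div_le_iff₀ (by positivity)]
          nlinarith
        rw [dist_eq_norm, norm_sub_rev]
        exact h5
      have hinf : t * c / (2 * M) ≤ Metric.infDist p S := by
        by_contra hlt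
        push_neg at hlt
        obtain ⟨s, hsS, hds⟩ := (Metric.infDist_lt_iff hSne).mp hlt
        exact absurd (hfar s hsS) (not_le.mpr hds)
      rw [le_div_iff₀ ht0]
      calc c / (2 * M) * t = t * c / (2 * M) := by ring
        _ ≤ Metric.infDist p S := hinf
    have hcobdd : Filter.IsCoboundedUnder (· ≥ ·)
        (nhdsWithin (0:ℝ) (Set.Ioi 0)) (fun t => Metric.infDist (x + t • y) S / t) :=
      Filter.isCoboundedUnder_ge_of_eventually_le _ (hub y)
    have := Filter.le_liminf_of_le hcobdd hlow
    rw [hy] at this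
    have : c / (2 * M) ≤ 0 := this
    have hpos : 0 < c / (2 * M) := by positivity
    linarith
  · -- halfspace ⊆ tangent cone
    intro hy
    set d := x0 - x with hddef
    have hLd : fderiv ℝ g x d < 0 := by
      have := grad_ineq_aux hgconv hgdiff x x0
      rw [hx, sub_zero] at this
      exact lt_of_le_of_lt this hx0
    have hd0 : d ≠ 0 := by
      intro h
      have : fderiv ℝ g x d = 0 := by rw [h]; simp
      linarith
    have hdn : 0 < ‖d‖ := norm_pos_iff.mpr hd0
    -- for each ε > 0, eventually the ratio is ≤ ε * ‖d‖
    have hkey : ∀ ε : ℝ, 0 < ε → ∀ᶠ t : ℝ in nhdsWithin 0 (Set.Ioi 0),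
        Metric.infDist (x + t • y) S / t ≤ ε * ‖d‖ := by
      intro ε hε
      set w := y + ε • d with hwdef
      have hLw : fderiv ℝ g x w < 0 := by
        have : fderiv ℝ g x w = fderiv ℝ g x y + ε * fderiv ℝ g x d := by
          simp [hwdef, map_add, map_smul, smul_eq_mul]
        rw [this]
        nlinarith
      have htend := dir_tendsto_aux hgdiff x w
      have htend' : Filter.Tendsto (fun t : ℝ => g (x + t • w) / t) (nhdsWithin 0 (Set.Ioi 0))
          (nhds (fderiv ℝ g x w)) := by
        refine htend.congr ?_
        intro t; rw [hx, sub_zero]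
      have hev : ∀ᶠ t : ℝ in nhdsWithin 0 (Set.Ioi 0), g (x + t • w) / t < 0 :=
        htend'.eventually (eventually_lt_nhds hLw)
      filter_upwards [self_mem_nhdsWithin, hev] with t ht hgt
      have ht0 : 0 < t := Set.mem_Ioi.mp ht
      have hmem : x + t • w ∈ S := by
        rw [hS]
        have : g (x + t • w) < 0 := by
          have := hgt
          rw [div_lt_iff₀ ht0] at this
          simpa using this
        exact le_of_lt this
      have h1 : Metric.infDist (x + t • y) S ≤ dist (x + t • y) (x + t • w) :=
        Metric.infDist_le_dist_of_mem hmem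
      have h2 : dist (x + t • y) (x + t • w) = t * (ε * ‖d‖) := by
        rw [dist_eq_norm]
        have heq : (x + t • y) - (x + t • w) = -(t • (ε • d)) := by
          rw [hwdef]; module
        rw [heq, norm_neg, norm_smul, norm_smul]
        simp only [Real.norm_eq_abs, abs_of_pos ht0, abs_of_pos hε]

      rw [div_le_iff₀ ht0]
      calc Metric.infDist (x + t • y) S ≤ t * (ε * ‖d‖) := h2 ▸ h1
        _ = ε * ‖d‖ * t := by ring
    have hbdd : Filter.IsBoundedUnder (· ≥ ·)
        (nhdsWithin (0:ℝ) (Set.Ioi 0)) (fun t => Metric.infDist (x + t • y) S / t) :=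
      Filter.isBoundedUnder_of_eventually_ge (hnonneg y)
    have hcobdd : Filter.IsCoboundedUnder (· ≥ ·)
        (nhdsWithin (0:ℝ) (Set.Ioi 0)) (fun t => Metric.infDist (x + t • y) S / t) :=
      Filter.isCoboundedUnder_ge_of_eventually_le _ (hub y)
    refine le_antisymm ?_ ?_
    · -- liminf ≤ 0
      refine le_of_forall_gt_imp_ge_of_dense ?_
      intro c hc
      have hε : (0:ℝ) < c / ‖d‖ := by positivity
      have := hkey (c / ‖d‖) hε
      have hev' : ∀ᶠ t : ℝ in nhdsWithin 0 (Set.Ioi 0),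
          Metric.infDist (x + t • y) S / t ≤ c := by
        filter_upwards [this] with t htt
        rwa [div_mul_cancel₀ c (ne_of_gt hdn)] at htt
      exact Filter.liminf_le_of_frequently_le hev'.frequently hbdd
    · exact Filter.le_liminf_of_le hcobdd (hnonneg y)
end
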